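/- arXiv:1610.07177 — 12 statements merged into one kernel-verified Lean document; each statement's English description precedes it below -/
import Mathlib

section
/- If G is a (P₃ ∪ P₂)-free graph with clique number ω, then the chromatic number of G is at most ω(ω+1)(ω+2)/6. -/
open SimpleGraph

/-- `H` occurs as an induced subgraph of `G`. -/
def IsInducedCopy {α β : Type*} (H : SimpleGraph α) (G : SimpleGraph β) : Prop :=
  ∃ f : α ↪ β, ∀ a b : α, G.Adj (f a) (f b) ↔ H.Adj a b

/-- `G` is `H`-free: no induced copy of `H`. -/
def Free {α β : Type*} (G : SimpleGraph α) (H : SimpleGraph β) : Prop :=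
  ¬ IsInducedCopy H G

/-- `P₃ ∪ P₂`: disjoint union of a path on 3 vertices and an edge. -/
def P3UP2 : SimpleGraph (Fin 5) :=
  SimpleGraph.fromRel (fun a b => (a, b) ∈ [((0 : Fin 5), (1 : Fin 5)), (1, 2), (3, 4)])

/-- The diamond: `K₄` minus an edge. -/
def diamondG : SimpleGraph (Fin 4) :=
  SimpleGraph.fromRel (fun a b =>
    (a, b) ∈ [((0 : Fin 4), (2 : Fin 4)), (0, 3), (1, 2), (1, 3), (2, 3)])

/-- `2K₂`: two disjoint edges. -/
def twoK2 : SimpleGraph (Fin 4) :=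
  SimpleGraph.fromRel (fun a b => (a, b) ∈ [((0 : Fin 4), (1 : Fin 4)), (2, 3)])

/-- `P₄ ∪ P₂`. -/
def P4UP2 : SimpleGraph (Fin 6) :=
  SimpleGraph.fromRel (fun a b =>
    (a, b) ∈ [((0 : Fin 6), (1 : Fin 6)), (1, 2), (2, 3), (4, 5)])

/-- The cycle on `n` vertices (for `n ≥ 3`), as a graph on `ZMod n`. -/
def cycG (n : ℕ) : SimpleGraph (ZMod n) :=
  SimpleGraph.fromRel (fun a b => b = a + 1)

/-- A graph is perfect if every induced subgraph has chromatic number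
equal to its clique number. -/
def IsPerfect {V : Type*} (G : SimpleGraph V) : Prop :=
  ∀ s : Set V, (G.induce s).chromaticNumber = ((G.induce s).cliqueNum : ℕ∞)

/-- The set `C_{ij}` attached to a maximum clique enumerated by `f : Fin ω ↪ V`:
vertices outside the clique, non-adjacent to both `f i` and `f j`, where `(i,j)`
is the lexicographically least such pair (this closed form is equivalent to the
iterative definition removing earlier `C`-sets). -/
def Cset {V : Type*} (G : SimpleGraph V) {ω : ℕ} (f : Fin ω ↪ V) (i j : Fin ω) : Set V :=
  {v | v ∉ Set.range f ∧ ¬ G.Adj v (f i) ∧ ¬ G.Adj v (f j) ∧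
    ∀ p q : Fin ω, p < q → ¬ G.Adj v (f p) → ¬ G.Adj v (f q) →
      i < p ∨ (i = p ∧ j ≤ q)}

/-- The set `I_a` attached to a maximum clique enumerated by `f : Fin ω ↪ V`:
vertices outside the clique adjacent to every clique vertex except `f k`. -/
def Iset {V : Type*} (G : SimpleGraph V) {ω : ℕ} (f : Fin ω ↪ V) (k : Fin ω) : Set V :=
  {v | v ∉ Set.range f ∧ ¬ G.Adj v (f k) ∧ ∀ l : Fin ω, l ≠ k → G.Adj v (f l)}

/-!
Fix a maximum clique `Q = {f 0, …, f (ω-1)}`. Every vertex misses some vertex of `Q`. The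
vertices adjacent to all of `Q` except `f k` form an independent set, since two adjacent ones
would extend `Q \ {f k}` to a clique of size `ω + 1`. Every other vertex is sorted by the two
smallest indices `i < j` of its non-neighbours in `Q`. Within the class `(i, j)`, an induced
`P₃` together with the edge `f i f j` would be an induced `P₃ ∪ P₂`, so the class induces a
disjoint union of cliques; each of these cliques is complete to the `j - 1` vertices `f p`,
`p < j`, `p ≠ i`, hence has at most `ω + 1 - j` vertices. Colouring the classes with disjoint
palettes uses `ω + ∑_{j < ω} j (ω + 1 - j) = ω (ω + 1) (ω + 2) / 6` colours.
-/

open Finset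

theorem Nat.add_sum_range_mul_sub_eq (n : ℕ) :
    n + ∑ j ∈ range n, j * (n + 1 - j) = n * (n + 1) * (n + 2) / 6 := by
  suffices h : 6 * (n + ∑ j ∈ range n, j * (n + 1 - j)) = n * (n + 1) * (n + 2) by
    rw [← h, Nat.mul_div_cancel_left _ (by norm_num)]
  induction n with
  | zero => simp
  | succ n ih =>
    have hsplit : ∀ j ∈ range (n + 1), j * (n + 1 + 1 - j) = j * (n + 1 - j) + j := by
      intro j hj
      rw [show n + 1 + 1 - j = n + 1 - j + 1 by have := mem_range.1 hj; omega, Nat.mul_succ]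
    have hgauss := sum_range_id_mul_two (n + 1)
    rw [Nat.add_sub_cancel] at hgauss
    rw [sum_congr rfl hsplit, sum_add_distrib, sum_range_succ (fun j => j * (n + 1 - j)),
      Nat.add_sub_cancel_left]
    linarith

namespace SimpleGraph

variable {V : Type*} {G : SimpleGraph V}

theorem IsClique.card_lt_of_cliqueFree {s : Finset V} {n : ℕ} (hs : G.IsClique (s : Set V))
    (hG : G.CliqueFree n) : #s < n := by
  by_contra! h
  obtain ⟨t, hts, ht⟩ := exists_subset_card_eq h
  exact hG t ⟨hs.subset hts, ht⟩

theorem colorable_of_cliqueFree_of_adj_trans [Finite V] {n : ℕ} (hG : G.CliqueFree (n + 1))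
    (htrans : ∀ ⦃a b c⦄, G.Adj a b → G.Adj b c → a ≠ c → G.Adj a c) : G.Colorable n := by
  classical
  have := Fintype.ofFinite V
  let e := Fintype.equivFin V
  -- Colour `v` by its number of earlier neighbours: these form a clique with `v`, and the
  -- number strictly increases along every edge.
  let earlier (v : V) : Finset V := {u | G.Adj u v ∧ e u < e v}
  have earlier_lt (v : V) : #(earlier v) < n := by
    have hclique : G.IsClique (insert v (earlier v) : Finset V) := by
      rw [coe_insert]
      refine IsClique.insert (fun a ha b hb hab => ?_) fun b hb _ => ?_
      · simp only [earlier, coe_filter, mem_univ, true_and] at ha hb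
        exact htrans ha.1 hb.1.symm hab
      · exact (mem_filter.1 hb).2.1.symm
    have := hclique.card_lt_of_cliqueFree hG
    rw [card_insert_of_notMem (by simp [earlier])] at this
    omega
  refine ⟨Coloring.mk (fun v => ⟨#(earlier v), earlier_lt v⟩) fun {u v} huv heq => ?_⟩
  wlog hlt : e u < e v generalizing u v
  · exact this huv.symm heq.symm ((Ne.lt_or_gt (e.injective.ne huv.ne)).resolve_left hlt)
  have hsub : earlier u ⊂ earlier v := by
    refine ssubset_iff_of_subset (fun w hw => ?_) |>.2 ⟨u, ?_, ?_⟩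
    · simp only [earlier, mem_filter, mem_univ, true_and] at hw ⊢
      exact ⟨htrans hw.1 huv fun h => (hw.2.trans hlt).ne (congrArg e h), hw.2.trans hlt⟩
    · simp [earlier, huv, hlt]
    · simp [earlier]
  exact (card_lt_card hsub).ne (Fin.val_eq_of_eq heq)

theorem cliqueFreeOn_of_forall_adj {S : Set V} {K : Finset V} {n : ℕ}
    (hK : G.IsClique (K : Set V)) (hSK : ∀ v ∈ S, ∀ w ∈ K, G.Adj v w)
    (hG : G.CliqueFree (n + #K)) : G.CliqueFreeOn S n := by
  classical
  intro t hts ht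
  have hdisj : Disjoint t K :=
    Finset.disjoint_left.2 fun _ hvt hvK => G.irrefl (hSK _ (hts hvt) _ hvK)
  refine hG (t ∪ K) ⟨fun x hx y hy hxy => ?_, by rw [card_union_of_disjoint hdisj, ht.card_eq]⟩
  simp only [coe_union, Set.mem_union, mem_coe] at hx hy
  rcases hx with hx | hx <;> rcases hy with hy | hy
  · exact ht.isClique hx hy hxy
  · exact hSK x (hts hx) y hy
  · exact (hSK y (hts hy) x hx).symm
  · exact hK hx hy hxy

theorem colorable_sum_of_forall_colorable_induce {ι : Type*} [Fintype ι] (S : ι → Set V)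
    (n : ι → ℕ) (hcover : ∀ v, ∃ i, v ∈ S i) (hcol : ∀ i, (G.induce (S i)).Colorable (n i)) :
    G.Colorable (∑ i, n i) := by
  choose idx hidx using hcover
  have C i : (G.induce (S i)).Coloring (Fin (n i)) := (hcol i).some
  have hvalid {u v : V} (huv : G.Adj u v) {i j : ι} (hu : u ∈ S i) (hv : v ∈ S j) :
      (⟨i, C i ⟨u, hu⟩⟩ : Σ i, Fin (n i)) ≠ ⟨j, C j ⟨v, hv⟩⟩ := by
    intro h
    obtain ⟨rfl, h⟩ := Sigma.mk.inj_iff.1 h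
    exact (C i).valid (show (G.induce (S i)).Adj ⟨u, hu⟩ ⟨v, hv⟩ from huv) (eq_of_heq h)
  simpa using (Coloring.mk (fun v => (⟨idx v, C (idx v) ⟨v, hidx v⟩⟩ : Σ i, Fin (n i)))
    fun huv => hvalid huv _ _).colorable

/-- An induced `P₃` anticomplete to the edge `d e` would give an induced `P₃ ∪ P₂`. -/
theorem adj_trans_induce_of_free_P3UP2 (hfree : _root_.Free G P3UP2) {d e : V}
    (hde : G.Adj d e) {S : Set V} (hS : ∀ x ∈ S, ¬G.Adj x d ∧ ¬G.Adj x e) ⦃a b c : S⦄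
    (hab : (G.induce S).Adj a b) (hbc : (G.induce S).Adj b c) (hac : a ≠ c) :
    (G.induce S).Adj a c := by
  obtain ⟨a, ha⟩ := a
  obtain ⟨b, hb⟩ := b
  obtain ⟨c, hc⟩ := c
  obtain ⟨had, hae⟩ := hS a ha
  obtain ⟨hbd, hbe⟩ := hS b hb
  obtain ⟨hcd, hce⟩ := hS c hc
  simp only [comap_adj, Function.Embedding.subtype_apply, ne_eq, Subtype.mk.injEq] at *
  by_contra hac'
  have := hab.ne; have := hbc.ne; have := hde.ne
  have : a ≠ d := by rintro rfl; exact hae hde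
  have : a ≠ e := by rintro rfl; exact had hde.symm
  have : b ≠ d := by rintro rfl; exact hbe hde
  have : b ≠ e := by rintro rfl; exact hbd hde.symm
  have : c ≠ d := by rintro rfl; exact hce hde
  have : c ≠ e := by rintro rfl; exact hcd hde.symm
  refine hfree ⟨⟨![a, b, c, d, e], fun x y hxy => ?_⟩, fun x y => ?_⟩
  · fin_cases x <;> fin_cases y <;> simp_all [eq_comm]
  · change G.Adj (![a, b, c, d, e] x) (![a, b, c, d, e] y) ↔ _
    fin_cases x <;> fin_cases y <;> simp_all [P3UP2, adj_comm]

section MaxClique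

variable {ω : ℕ} {f : Fin ω ↪ V}

theorem IsClique.map_of_range (hQ : G.IsClique (Set.range f)) (s : Finset (Fin ω)) :
    G.IsClique (s.map f : Set V) :=
  hQ.subset (by simp)

theorem exists_not_adj_of_isClique_range (hQ : G.IsClique (Set.range f))
    (hω : G.CliqueFree (ω + 1)) (v : V) : ∃ k, ¬G.Adj v (f k) := by
  by_contra! h
  have := cliqueFreeOn_of_forall_adj (S := {v}) (hQ.map_of_range univ) (by simpa using h)
    (by rwa [card_map, card_univ, Fintype.card_fin, add_comm])
  exact absurd ((cliqueFreeOn_singleton G).1 this) (lt_irrefl 1)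

theorem colorable_one_induce_forall_adj_ne (hQ : G.IsClique (Set.range f))
    (hω : G.CliqueFree (ω + 1)) (k : Fin ω) :
    (G.induce {v | ∀ l ≠ k, G.Adj v (f l)}).Colorable 1 := by
  rw [colorable_one_iff, ← cliqueFree_two, cliqueFree_induce_iff]
  refine cliqueFreeOn_of_forall_adj (hQ.map_of_range (univ.erase k)) ?_ (hω.mono ?_)
  · intro v hv w hw
    obtain ⟨l, hl, rfl⟩ := mem_map.1 hw
    exact hv l (ne_of_mem_erase hl)
  · rw [card_map, card_erase_of_mem (mem_univ k), card_univ, Fintype.card_fin]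
    have := k.pos
    omega

theorem colorable_induce_not_adj_pair [Finite V] (hfree : _root_.Free G P3UP2)
    (hQ : G.IsClique (Set.range f)) (hω : G.CliqueFree (ω + 1)) {i j : Fin ω} (hij : i < j) :
    (G.induce {v | ¬G.Adj v (f i) ∧ ¬G.Adj v (f j) ∧ ∀ p < j, p ≠ i → G.Adj v (f p)}).Colorable
      (ω + 1 - j) := by
  have hfij : G.Adj (f i) (f j) :=
    hQ (Set.mem_range_self i) (Set.mem_range_self j) (f.injective.ne hij.ne)
  refine colorable_of_cliqueFree_of_adj_trans ?_
    (adj_trans_induce_of_free_P3UP2 hfree hfij fun x hx => ⟨hx.1, hx.2.1⟩)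
  rw [cliqueFree_induce_iff]
  refine cliqueFreeOn_of_forall_adj (hQ.map_of_range ((Iio j).erase i)) ?_ (hω.mono ?_)
  · intro v hv w hw
    obtain ⟨p, hp, rfl⟩ := mem_map.1 hw
    obtain ⟨hpi, hpj⟩ := mem_erase.1 hp
    exact hv.2.2 p (mem_Iio.1 hpj) hpi
  · rw [card_map, card_erase_of_mem (mem_Iio.2 hij), Fin.card_Iio]
    have : (i : ℕ) < j := hij
    omega

variable (G f) in
/-- `inr ⟨j, i⟩` encodes the pair `i < j`; its class consists of the vertices whose two smallest
non-neighbours in the clique are `f i` and `f j`. -/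
def cliqueClass : Fin ω ⊕ (Σ j : Fin ω, Fin j) → Set V
  | .inl k => {v | ∀ l ≠ k, G.Adj v (f l)}
  | .inr ⟨j, i⟩ => {v | ¬G.Adj v (f (i.castLE j.isLt.le)) ∧ ¬G.Adj v (f j) ∧
      ∀ p < j, p ≠ i.castLE j.isLt.le → G.Adj v (f p)}

theorem exists_mem_cliqueClass (hQ : G.IsClique (Set.range f)) (hω : G.CliqueFree (ω + 1))
    (v : V) : ∃ x, v ∈ cliqueClass G f x := by
  classical
  by_cases hone : ∃ k, ∀ l ≠ k, G.Adj v (f l)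
  · obtain ⟨k, hk⟩ := hone
    exact ⟨.inl k, hk⟩
  push Not at hone
  let N : Finset (Fin ω) := {k | ¬G.Adj v (f k)}
  obtain ⟨k₀, hk₀⟩ := exists_not_adj_of_isClique_range hQ hω v
  have hN : N.Nonempty := ⟨k₀, by simpa [N]⟩
  let i := N.min' hN
  obtain ⟨l, hli, hl⟩ := hone i
  have hN' : (N.erase i).Nonempty := ⟨l, mem_erase.2 ⟨hli, by simpa [N]⟩⟩
  let j := (N.erase i).min' hN'
  have hjN : j ∈ N.erase i := min'_mem _ _
  have hij : i < j :=
    lt_of_le_of_ne (min'_le _ _ (mem_of_mem_erase hjN)) (ne_of_mem_erase hjN).symm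
  refine ⟨.inr ⟨j, ⟨i, hij⟩⟩, ?_, ?_, fun p hpj hpi => ?_⟩
  · simpa [N] using min'_mem N hN
  · simpa [N] using mem_of_mem_erase hjN
  · by_contra hp
    exact (min'_le _ p (mem_erase.2 ⟨hpi, by simpa [N]⟩)).not_gt hpj

theorem colorable_of_free_P3UP2 [Finite V] (hfree : _root_.Free G P3UP2)
    (hQ : G.IsClique (Set.range f)) (hω : G.CliqueFree (ω + 1)) :
    G.Colorable (ω + ∑ j : Fin ω, j * (ω + 1 - j)) := by
  have := colorable_sum_of_forall_colorable_induce (G := G) (cliqueClass G f)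
    (Sum.elim (fun _ => 1) fun x => ω + 1 - x.1) (exists_mem_cliqueClass hQ hω) ?_
  · simpa [Fintype.sum_sum_type, Fintype.sum_sigma] using this
  rintro (k | ⟨j, i⟩)
  · exact colorable_one_induce_forall_adj_ne hQ hω k
  · exact colorable_induce_not_adj_pair hfree hQ hω (Fin.lt_def.2 i.isLt)

end MaxClique

end SimpleGraph

theorem stmt0 {V : Type*} [Fintype V] (G : SimpleGraph V) (hfree : _root_.Free G P3UP2) :
    G.chromaticNumber ≤ ((G.cliqueNum * (G.cliqueNum + 1) * (G.cliqueNum + 2) / 6 : ℕ) : ℕ∞) := by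
  obtain ⟨s, hs⟩ := G.exists_isNClique_cliqueNum
  have hω : G.CliqueFree (G.cliqueNum + 1) := fun t ht => by
    have : #t ≤ G.cliqueNum := IsClique.card_le_cliqueNum (tc := ht.isClique)
    have := ht.card_eq
    omega
  let f : Fin G.cliqueNum ↪ V :=
    (s.equivFinOfCardEq hs.card_eq).symm.toEmbedding.trans (.subtype _)
  have hQ : G.IsClique (Set.range f) :=
    hs.isClique.subset (Set.range_subset_iff.2 fun k => by simp [f])
  have := (colorable_of_free_P3UP2 hfree hQ hω).chromaticNumber_le
  rwa [Fin.sum_univ_eq_sum_range (fun j => j * (G.cliqueNum + 1 - j)),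
    Nat.add_sum_range_mul_sub_eq] at this
end

section
/- If G is a (P₄ ∪ P₂)-free graph with clique number ω, then the chromatic number of G is at most ω(ω+1)(ω+2)/6. -/
/-!
Fix a maximum clique `f 0, …, f (ω - 1)`. Every vertex misses some `f k`. The vertices missing
only `f k` form, together with `f k`, an independent set. A vertex whose first two missed clique
vertices are `f i` and `f j` (`i < j`) is complete to the `j - 1` vertices `f p` with `p < j`,
`p ≠ i`, so these vertices induce a graph of clique number at most `ω + 1 - j`; that graph is
`P₄`-free, since an induced `P₄` in it together with the edge `f i f j` would be an induced
`P₄ ∪ P₂`. `P₄`-free graphs are perfect (a maximal independent set meets every maximal clique), so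
colouring each class with its own palette uses `ω + ∑_{j < ω} j (ω + 1 - j) = ω(ω+1)(ω+2)/6`
colours.
-/

open SimpleGraph

open Finset

namespace SimpleGraph

variable {V : Type*} {G : SimpleGraph V}

theorem colorable_sum_of_cover {ι : Type*} (s : Finset ι) (S : ι → Set V) (k : ι → ℕ)
    (hS : ∀ v, ∃ p ∈ s, v ∈ S p) (hk : ∀ p ∈ s, (G.induce (S p)).Colorable (k p)) :
    G.Colorable (∑ p ∈ s, k p) := by
  choose φ hφs hφ using hS
  have C : ∀ p : s, (G.induce (S p)).Coloring (Fin (k p)) := fun p => (hk p p.2).some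
  have hC : ∀ (p q : s) (x : S p) (y : S q), p = q → G.Adj x y → HEq (C p x) (C q y) → False := by
    rintro p q x y rfl hxy h
    exact (C p).valid hxy (eq_of_heq h)
  let c : G.Coloring (Σ p : s, Fin (k p)) :=
    Coloring.mk (fun v => ⟨⟨φ v, hφs v⟩, C _ ⟨v, hφ v⟩⟩) fun hvw hc =>
      hC _ _ _ _ (Sigma.mk.inj_iff.mp hc).1 hvw (Sigma.mk.inj_iff.mp hc).2
  simpa only [Fintype.card_sigma, Fintype.card_fin, univ_eq_attach, sum_attach] using c.colorable

theorem IsIndepSet.colorable_induce {S : Set V} (hS : G.IsIndepSet S) :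
    (G.induce S).Colorable 1 :=
  ⟨Coloring.mk (fun _ => 0) fun {x y} hxy _ => hS x.2 y.2 (fun h => hxy.ne (Subtype.ext h)) hxy⟩

theorem card_add_card_le_cliqueNum [Finite V] {Q B : Finset V} (hQ : G.IsClique (Q : Set V))
    (hB : G.IsClique (B : Set V)) (hQB : ∀ q ∈ Q, ∀ b ∈ B, G.Adj q b) :
    #Q + #B ≤ G.cliqueNum := by
  classical
  have hdisj : Disjoint Q B :=
    Finset.disjoint_left.mpr fun q hq hqB => (hQB q hq q hqB).ne rfl
  rw [← card_union_of_disjoint hdisj]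
  refine IsClique.card_le_cliqueNum (tc := ?_)
  rw [coe_union]
  exact Set.pairwise_union.mpr
    ⟨hQ, hB, fun q hq b hb _ => ⟨hQB q hq b hb, (hQB q hq b hb).symm⟩⟩

theorem cliqueNum_induce_add_card_le [Finite V] {S : Set V} {B : Finset V}
    (hB : G.IsClique (B : Set V)) (hSB : ∀ v ∈ S, ∀ b ∈ B, G.Adj v b) :
    (G.induce S).cliqueNum + #B ≤ G.cliqueNum := by
  obtain ⟨Q, hQ⟩ := (G.induce S).exists_isNClique_cliqueNum
  rw [isNClique_induce_iff] at hQ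
  rw [← hQ.card_eq]
  refine card_add_card_le_cliqueNum hQ.isClique hB fun q hq => ?_
  obtain ⟨q, -, rfl⟩ := mem_map.mp hq
  exact hSB q q.2

/-- Distinctness of `a, b, c, d` follows from the adjacency pattern. -/
def P4Free (G : SimpleGraph V) : Prop :=
  ∀ ⦃a b c d : V⦄, G.Adj a b → G.Adj b c → G.Adj c d → ¬G.Adj a c → ¬G.Adj a d → ¬G.Adj b d →
    False

theorem P4Free.induce (hG : G.P4Free) (S : Set V) : (G.induce S).P4Free :=
  fun _ _ _ _ => @hG _ _ _ _

theorem P4Free.exists_mem_of_maximal {I K : Finset V} (hG : G.P4Free)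
    (hI : Maximal G.IsIndepSet (I : Set V)) (hK : Maximal G.IsClique (K : Set V))
    (hK₀ : K.Nonempty) : ∃ x ∈ K, x ∈ I := by
  classical
  by_contra! hKI
  have hdom : ∀ v ∉ I, ∃ u ∈ I, G.Adj u v := by
    intro v hv
    by_contra! h
    exact hv (hI.mem_of_prop_insert
      (hI.prop.insert fun u hu _ => ⟨fun h' => h u hu h'.symm, h u hu⟩))
  have hcodom : ∀ x ∉ K, ∃ w ∈ K, ¬G.Adj x w := by
    intro x hx
    by_contra! h
    exact hx (hK.mem_of_prop_insert (hK.prop.insert fun w hw _ => h w hw))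
  obtain ⟨v₀, hv₀⟩ := hK₀
  obtain ⟨i₀, hi₀, -⟩ := hdom v₀ (hKI v₀ hv₀)
  -- `i ∈ I` with the most neighbours in `K`; then `i - v - w - j` below is an induced `P₄`.
  obtain ⟨i, hi, himax⟩ := exists_max_image I (fun u => #{w ∈ K | G.Adj u w}) ⟨i₀, hi₀⟩
  obtain ⟨w, hw, hiw⟩ := hcodom i fun h => hKI i h hi
  obtain ⟨j, hj, hjw⟩ := hdom w (hKI w hw)
  have hij : ¬G.Adj i j := hI.prop hi hj fun h => hiw (h ▸ hjw)
  obtain ⟨v, hv, hiv, hjv⟩ : ∃ v ∈ K, G.Adj i v ∧ ¬G.Adj j v := by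
    by_contra! h
    have hsub : insert w {x ∈ K | G.Adj i x} ⊆ {x ∈ K | G.Adj j x} :=
      insert_subset (mem_filter.mpr ⟨hw, hjw⟩) fun x hx =>
        mem_filter.mpr ⟨(mem_filter.mp hx).1, h x (mem_filter.mp hx).1 (mem_filter.mp hx).2⟩
    have := card_le_card hsub
    rw [card_insert_of_notMem (by simp [hiw])] at this
    have := himax j hj
    omega
  exact hG hiv (hK.prop hv hw fun h => hjv (h ▸ hjw)) hjw.symm hiw hij fun h => hjv h.symm

theorem P4Free.colorable_of_cliqueNum_le [Finite V] (hG : G.P4Free) {n : ℕ}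
    (hn : G.cliqueNum ≤ n) : G.Colorable n := by
  induction n generalizing V with
  | zero =>
    refine colorable_zero_iff.mpr ⟨fun v => ?_⟩
    have := IsClique.card_le_cliqueNum (G := G) (t := {v}) (tc := by simp)
    simp at this
    omega
  | succ n ih =>
    obtain ⟨I, hI⟩ := G.maximumIndepSet_exists
    have hrest : (G.induce (I : Set V)ᶜ).cliqueNum ≤ n := by
      by_contra! hlt
      obtain ⟨K, hK⟩ := (G.induce (I : Set V)ᶜ).exists_isNClique_cliqueNum
      rw [isNClique_induce_iff] at hK
      have hKmax : G.IsMaximumClique (K.map (.subtype _)) :=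
        ⟨hK.isClique, fun t ht => by rw [hK.card_eq]; exact ht.card_le_cliqueNum.trans (by omega)⟩
      obtain ⟨x, hxK, hxI⟩ := hG.exists_mem_of_maximal (hI.isMaximalIndepSet _)
        (hKmax.isMaximalClique _) (card_pos.mp (by rw [hK.card_eq]; omega))
      obtain ⟨x, -, rfl⟩ := mem_map.mp hxK
      exact x.2 hxI
    have := colorable_sum_of_cover (G := G) univ ![(I : Set V)ᶜ, I] ![n, 1] (fun v => ?_)
      (fun p _ => ?_)
    · simpa using this
    · by_cases hv : v ∈ I
      · exact ⟨1, mem_univ _, hv⟩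
      · exact ⟨0, mem_univ _, hv⟩
    · fin_cases p
      · exact ih (hG.induce _) hrest
      · exact hI.isIndepSet.colorable_induce

instance : DecidableRel P4UP2.Adj :=
  fun x y => decidable_of_iff _ (fromRel_adj _ x y).symm

theorem injective_of_forall_adj_iff {W : Type*} {H : SimpleGraph W} {g : W → V}
    (hH : ∀ a b, (∀ c, H.Adj a c ↔ H.Adj b c) → a = b)
    (hg : ∀ a b, G.Adj (g a) (g b) ↔ H.Adj a b) : Function.Injective g :=
  fun a b h => hH a b fun c => by rw [← hg, ← hg, h]

theorem p4Free_induce_of_free {S : Set V} {x y : V} (hG : _root_.Free G P4UP2) (hxy : G.Adj x y)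
    (hS : ∀ v ∈ S, ¬G.Adj x v ∧ ¬G.Adj y v) : (G.induce S).P4Free := by
  rintro ⟨a, ha⟩ ⟨b, hb⟩ ⟨c, hc⟩ ⟨d, hd⟩ hab hbc hcd hac had hbd
  simp only [comap_adj, Function.Embedding.subtype_apply] at hab hbc hcd hac had hbd
  obtain ⟨hxa, hya⟩ := hS a ha
  obtain ⟨hxb, hyb⟩ := hS b hb
  obtain ⟨hxc, hyc⟩ := hS c hc
  obtain ⟨hxd, hyd⟩ := hS d hd
  have hg : ∀ p q, G.Adj (![a, b, c, d, x, y] p) (![a, b, c, d, x, y] q) ↔ P4UP2.Adj p q := by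
    intro p q
    fin_cases p <;> fin_cases q <;> simp [P4UP2, fromRel_adj, G.adj_comm, *]
  exact hG ⟨⟨![a, b, c, d, x, y], injective_of_forall_adj_iff (by decide) hg⟩, hg⟩

section MaximumClique

variable {n : ℕ}

/-- Contains `f k` itself, so these sets also colour the clique. -/
def missesOnly (G : SimpleGraph V) (f : Fin n ↪ V) (k : Fin n) : Set V :=
  {v | ¬G.Adj v (f k) ∧ ∀ l ≠ k, G.Adj v (f l)}

def missesFirstTwo (G : SimpleGraph V) (f : Fin n ↪ V) (i j : Fin n) : Set V :=
  {v | ¬G.Adj v (f i) ∧ ¬G.Adj v (f j) ∧ ∀ p < j, p ≠ i → G.Adj v (f p)}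

variable {f : Fin n ↪ V}

theorem p4Free_induce_missesFirstTwo (hG : _root_.Free G P4UP2) (hf : G.IsClique (Set.range f))
    {i j : Fin n} (hij : i ≠ j) : (G.induce (G.missesFirstTwo f i j)).P4Free :=
  p4Free_induce_of_free hG (hf ⟨i, rfl⟩ ⟨j, rfl⟩ (f.injective.ne hij))
    fun _ hv => ⟨fun h => hv.1 h.symm, fun h => hv.2.1 h.symm⟩

variable [Finite V]

theorem exists_mem_missesOnly_or_missesFirstTwo (hf : G.IsClique (Set.range f))
    (hn : G.cliqueNum ≤ n) (v : V) :
    (∃ k, v ∈ G.missesOnly f k) ∨ ∃ i j, i < j ∧ v ∈ G.missesFirstTwo f i j := by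
  classical
  set T : Finset (Fin n) := {k | ¬G.Adj v (f k)} with hT
  have hT₀ : T.Nonempty := by
    by_contra hT₀
    have hadj : ∀ k, G.Adj v (f k) := fun k => by
      by_contra h
      exact hT₀ ⟨k, by simpa [hT] using h⟩
    have := card_add_card_le_cliqueNum (Q := {v}) (B := univ.map f) (by simp)
      (hf.subset (by simp)) (by simpa using hadj)
    simp only [card_singleton, card_map, card_univ, Fintype.card_fin] at this
    omega
  obtain ⟨i, hiT, hi_min⟩ := T.exists_min_image id hT₀
  by_cases h : ∀ l ≠ i, G.Adj v (f l)
  · exact .inl ⟨i, (mem_filter.mp hiT).2, h⟩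
  push Not at h
  obtain ⟨j, hjT, hj_min⟩ := (T.erase i).exists_min_image id
    (h.imp fun l hl => mem_erase.mpr ⟨hl.1, by simpa [hT] using hl.2⟩)
  have hjT' := mem_of_mem_erase hjT
  refine .inr ⟨i, j, lt_of_le_of_ne (hi_min j hjT') (ne_of_mem_erase hjT).symm,
    (mem_filter.mp hiT).2, (mem_filter.mp hjT').2, fun p hpj hpi => ?_⟩
  by_contra hp
  exact (hj_min p (mem_erase.mpr ⟨hpi, by simpa [hT] using hp⟩)).not_gt hpj

theorem isIndepSet_missesOnly (hf : G.IsClique (Set.range f)) (hn : G.cliqueNum ≤ n)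
    (k : Fin n) : G.IsIndepSet (G.missesOnly f k) := by
  classical
  intro v hv w hw hvw hadj
  have := card_add_card_le_cliqueNum (Q := {v, w}) (B := (univ.erase k).map f)
    (by rw [coe_pair]; exact isClique_pair.mpr fun _ => hadj) (hf.subset (by simp))
    (by
      simp only [mem_insert, mem_singleton, mem_map, mem_erase, mem_univ, and_true]
      rintro q (rfl | rfl) _ ⟨l, hl, rfl⟩
      exacts [hv.2 l hl, hw.2 l hl])
  rw [card_pair hvw, card_map, card_erase_of_mem (mem_univ _), card_univ, Fintype.card_fin] at this
  have := k.pos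
  omega

theorem cliqueNum_induce_missesFirstTwo_le (hf : G.IsClique (Set.range f))
    (hn : G.cliqueNum ≤ n) {i j : Fin n} (hij : i < j) :
    (G.induce (G.missesFirstTwo f i j)).cliqueNum ≤ n + 1 - j := by
  classical
  have := cliqueNum_induce_add_card_le (S := G.missesFirstTwo f i j)
    (B := ((Iio j).erase i).map f) (hf.subset (by simp)) fun v hv b hb => by
      obtain ⟨p, hp, rfl⟩ := mem_map.mp hb
      exact hv.2.2 p (mem_Iio.mp (mem_of_mem_erase hp)) (ne_of_mem_erase hp)
  rw [card_map, card_erase_of_mem (mem_Iio.mpr hij), Fin.card_Iio] at this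
  have : (i : ℕ) < j := hij
  omega

end MaximumClique

end SimpleGraph

theorem six_mul_add_sum_range_mul_sub (n : ℕ) :
    6 * (n + ∑ j ∈ range n, j * (n + 1 - j)) = n * (n + 1) * (n + 2) := by
  induction n with
  | zero => simp
  | succ n ih =>
    have h : ∀ j ∈ range n, j * (n + 1 + 1 - j) = j * (n + 1 - j) + j := fun j hj => by
      rw [mem_range] at hj
      rw [show n + 1 + 1 - j = n + 1 - j + 1 by omega]
      ring
    have gauss := sum_range_id_mul_two n
    rw [sum_range_succ, sum_congr rfl h, sum_add_distrib, show n + 1 + 1 - n = 2 by omega]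
    rcases n with _ | n
    · simp
    · simp only [Nat.add_sub_cancel] at gauss
      nlinarith

theorem Fin.sum_filter_fst_lt_snd {n : ℕ} (g : ℕ → ℕ) :
    ∑ p ∈ univ.filter (fun p : Fin n × Fin n => p.1 < p.2), g p.2 = ∑ j ∈ range n, j * g j := by
  rw [sum_filter, Fintype.sum_prod_type_right, ← Fin.sum_univ_eq_sum_range (fun j => j * g j)]
  refine sum_congr rfl fun j _ => ?_
  rw [← sum_filter, filter_gt_eq_Iio]
  simp

theorem stmt1 {V : Type*} [Fintype V] (G : SimpleGraph V) (hfree : _root_.Free G P4UP2) :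
    G.chromaticNumber ≤ ((G.cliqueNum * (G.cliqueNum + 1) * (G.cliqueNum + 2) / 6 : ℕ) : ℕ∞) := by
  classical
  obtain ⟨K, hK⟩ := G.exists_isNClique_cliqueNum
  set n := G.cliqueNum
  set e := (K.equivFinOfCardEq hK.card_eq).symm
  set f : Fin n ↪ V := e.toEmbedding.trans (.subtype _)
  have hf : G.IsClique (Set.range f) := hK.isClique.subset (by rintro _ ⟨k, rfl⟩; exact (e k).2)
  have hcol := G.colorable_sum_of_cover (univ.disjSum {p : Fin n × Fin n | p.1 < p.2})
    (Sum.elim (G.missesOnly f) fun p => G.missesFirstTwo f p.1 p.2)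
    (Sum.elim (fun _ => 1) fun p => n + 1 - p.2) (fun v => ?_) ?_
  · rw [sum_disjSum] at hcol
    simp only [Sum.elim_inl, Sum.elim_inr, sum_const, card_univ, Fintype.card_fin, smul_eq_mul,
      mul_one, Fin.sum_filter_fst_lt_snd (fun j => n + 1 - j)] at hcol
    have := six_mul_add_sum_range_mul_sub n
    exact (hcol.mono (by omega)).chromaticNumber_le
  · rcases exists_mem_missesOnly_or_missesFirstTwo hf le_rfl v with ⟨k, hk⟩ | ⟨i, j, hij, hv⟩
    exacts [⟨.inl k, by simp, hk⟩, ⟨.inr (i, j), by simpa using hij, hv⟩]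
  · rintro (k | ⟨i, j⟩) hp
    · exact (isIndepSet_missesOnly hf le_rfl k).colorable_induce
    · have hij : i < j := by simpa using hp
      exact (p4Free_induce_missesFirstTwo hfree hf hij.ne).colorable_of_cliqueNum_le
        (cliqueNum_induce_missesFirstTwo_le hf le_rfl hij)
end

section
/- Let G be a (P₃ ∪ P₂)-free graph, A a maximum clique of G with vertices labelled 1,…,ω, and for i < j let C_{ij} be the set of vertices outside A (and not in any earlier C-set in lexicographic order) non-adjacent to both i and j. Then the subgraph induced by each C_{ij} is P₃-free, and hence is a disjoint union of cliques. -/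
open SimpleGraph

/-! An induced `P₃` inside a set anticomplete to an edge `ab` would, together with `ab`, be an
induced `P₃ ∪ P₂`. Every vertex of `C_{ij}` is anticomplete to the clique edge `f i f j`, so
adjacency is transitive on `C_{ij}`, which is the same as `C_{ij}` inducing a `P₃`-free graph. -/

theorem free_pathGraph_three_of_adj_trans {V : Type*} {G : SimpleGraph V}
    (h : ∀ x y z, G.Adj x y → G.Adj y z → x ≠ z → G.Adj x z) :
    _root_.Free G (pathGraph 3) := by
  rintro ⟨g, hg⟩
  have h02 := (hg 0 2).not.mpr (by simp [pathGraph_adj])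
  exact h02 (h _ _ _ ((hg 0 1).mpr (by simp [pathGraph_adj]))
    ((hg 1 2).mpr (by simp [pathGraph_adj])) (g.injective.ne (by decide)))

theorem adj_trans_of_free_P3UP2 {V : Type*} {G : SimpleGraph V} (hfree : _root_.Free G P3UP2)
    {a b : V} (hab : G.Adj a b) {S : Set V} (hS : ∀ v ∈ S, ¬ G.Adj v a ∧ ¬ G.Adj v b)
    {x y z : V} (hx : x ∈ S) (hy : y ∈ S) (hz : z ∈ S)
    (hxy : G.Adj x y) (hyz : G.Adj y z) (hxz : x ≠ z) : G.Adj x z := by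
  by_contra hnxz
  obtain ⟨hxa, hxb⟩ := hS x hx
  obtain ⟨hya, hyb⟩ := hS y hy
  obtain ⟨hza, hzb⟩ := hS z hz
  have hinj : Function.Injective ![x, y, z, a, b] := by
    have hax : a ≠ x := by rintro rfl; exact hya hxy.symm
    have hbx : b ≠ x := by rintro rfl; exact hyb hxy.symm
    have hay : a ≠ y := by rintro rfl; exact hxa hxy
    have hby : b ≠ y := by rintro rfl; exact hxb hxy
    have haz : a ≠ z := by rintro rfl; exact hya hyz
    have hbz : b ≠ z := by rintro rfl; exact hyb hyz
    simp [Function.Injective, Fin.forall_fin_succ, eq_comm, hxy.ne, hyz.ne, hab.ne, *]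
  refine hfree ⟨⟨![x, y, z, a, b], hinj⟩, fun p q => ?_⟩
  fin_cases p <;> fin_cases q <;>
    simp [P3UP2, *, hxy.symm, hyz.symm, hab.symm, G.adj_comm a, G.adj_comm b, G.adj_comm z x]

theorem stmt2_general {V : Type*} (G : SimpleGraph V) {ω : ℕ} (f : Fin ω ↪ V)
    (hA : G.IsClique (Set.range f))
    (hfree : _root_.Free G P3UP2) (i j : Fin ω) (hij : i < j) :
    _root_.Free (G.induce (Cset G f i j)) (pathGraph 3) ∧
      ∀ x ∈ Cset G f i j, ∀ y ∈ Cset G f i j, ∀ z ∈ Cset G f i j,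
        G.Adj x y → G.Adj y z → x ≠ z → G.Adj x z := by
  have hfij : G.Adj (f i) (f j) :=
    hA (Set.mem_range_self i) (Set.mem_range_self j) (f.injective.ne hij.ne)
  have htrans : ∀ x ∈ Cset G f i j, ∀ y ∈ Cset G f i j, ∀ z ∈ Cset G f i j,
      G.Adj x y → G.Adj y z → x ≠ z → G.Adj x z := fun x hx y hy z hz =>
    adj_trans_of_free_P3UP2 hfree hfij (fun v hv => ⟨hv.2.1, hv.2.2.1⟩) hx hy hz
  exact ⟨free_pathGraph_three_of_adj_trans fun (x y z : Cset G f i j) hxy hyz hxz =>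
    htrans x x.2 y y.2 z z.2 hxy hyz (Subtype.coe_injective.ne hxz), htrans⟩

theorem stmt2 {V : Type*} [Fintype V] (G : SimpleGraph V) {ω : ℕ} (f : Fin ω ↪ V)
    (hA : G.IsClique (Set.range f))
    (hmax : ∀ t : Finset V, G.IsClique (t : Set V) → t.card ≤ ω)
    (hfree : _root_.Free G P3UP2) (i j : Fin ω) (hij : i < j) :
    _root_.Free (G.induce (Cset G f i j)) (pathGraph 3) ∧
      ∀ x ∈ Cset G f i j, ∀ y ∈ Cset G f i j, ∀ z ∈ Cset G f i j,
        G.Adj x y → G.Adj y z → x ≠ z → G.Adj x z :=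
  stmt2_general G f hA hfree i j hij
end

section
/- Let G be a graph, A a maximum clique of G, and for a ∈ A let I_a be the set of vertices outside A adjacent to every vertex of A except a, and non-adjacent to a. Then each I_a is an independent set. -/
open SimpleGraph

theorem stmt3 {V : Type*} [Fintype V] (G : SimpleGraph V) {ω : ℕ} (f : Fin ω ↪ V)
    (hA : G.IsClique (Set.range f))
    (hmax : ∀ t : Finset V, G.IsClique (t : Set V) → t.card ≤ ω) (k : Fin ω) :
    ∀ x ∈ Iset G f k, ∀ y ∈ Iset G f k, ¬ G.Adj x y := by
  classical
  rintro x ⟨hxr, hxk, hxl⟩ y ⟨hyr, hyk, hyl⟩ hxy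
  -- build the clique (range f \ {f k}) ∪ {x, y}
  set t : Finset V := insert x (insert y ((Finset.univ.image f).erase (f k))) with ht
  have hclique : G.IsClique (t : Set V) := by
    intro u hu v hv huv
    simp only [ht, Finset.coe_insert, Set.mem_insert_iff, Finset.coe_erase,
      Finset.coe_image, Finset.coe_univ, Set.image_univ, Set.mem_diff,
      Set.mem_range, Set.mem_singleton_iff] at hu hv
    rcases hu with rfl | rfl | ⟨⟨i, rfl⟩, hik⟩ <;>
      rcases hv with rfl | rfl | ⟨⟨j, rfl⟩, hjk⟩
    · exact absurd rfl huv
    · exact hxy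
    · exact hxl j fun h => hjk (by rw [h])
    · exact hxy.symm
    · exact absurd rfl huv
    · exact hyl j fun h => hjk (by rw [h])
    · exact (hxl i fun h => hik (by rw [h])).symm
    · exact (hyl i fun h => hik (by rw [h])).symm
    · exact hA ⟨i, rfl⟩ ⟨j, rfl⟩ huv
  have hcard := hmax t hclique
  have hxny : x ≠ y := G.ne_of_adj hxy
  have hximg : x ∉ insert y ((Finset.univ.image f).erase (f k)) := by
    simp only [Finset.mem_insert, Finset.mem_erase, Finset.mem_image, Finset.mem_univ,
      true_and]
    rintro (rfl | ⟨-, i, rfl⟩)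
    · exact hxny rfl
    · exact hxr ⟨i, rfl⟩
  have hyimg : y ∉ (Finset.univ.image f).erase (f k) := by
    simp only [Finset.mem_erase, Finset.mem_image, Finset.mem_univ, true_and]
    rintro ⟨-, i, rfl⟩
    exact hyr ⟨i, rfl⟩
  have hkimg : f k ∈ Finset.univ.image f := by
    exact Finset.mem_image_of_mem f (Finset.mem_univ k)
  have himgcard : (Finset.univ.image f).card = ω := by
    rw [Finset.card_image_of_injective _ f.injective, Finset.card_univ, Fintype.card_fin]
  have : t.card = ω + 1 := by
    rw [ht, Finset.card_insert_of_notMem hximg, Finset.card_insert_of_notMem hyimg,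
      Finset.card_erase_of_mem hkimg, himgcard]
    have hω : 1 ≤ ω := by
      rcases k with ⟨k, hk⟩; omega
    omega
  omega
end

section
/- Let G be a graph with maximum clique A = {1,…,ω} and let C_{ij} (i < j) be the set of vertices (in lexicographic order of pairs, excluding earlier sets) non-adjacent to both i and j. Then for j ≥ 2, the clique number of the subgraph induced by C_{ij} is at most ω − (j − 2). -/
open SimpleGraph

theorem stmt4 {V : Type*} [Fintype V] (G : SimpleGraph V) {ω : ℕ} (f : Fin ω ↪ V)
    (hA : G.IsClique (Set.range f))
    (hmax : ∀ t : Finset V, G.IsClique (t : Set V) → t.card ≤ ω)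
    (i j : Fin ω) (hij : i < j) :
    ∀ t : Finset V, (t : Set V) ⊆ Cset G f i j → G.IsClique (t : Set V) →
      t.card + (j : ℕ) ≤ ω + 1 := by
  classical
  intro t hsub ht
  -- every vertex of Cset is adjacent to f k for k < j, k ≠ i
  have key : ∀ v ∈ t, ∀ k : Fin ω, k < j → k ≠ i → G.Adj v (f k) := by
    intro v hv k hkj hki
    obtain ⟨hv0, hvi, hvj, hmin⟩ := hsub hv
    by_contra h
    rcases lt_trichotomy k i with hk | hk | hk
    · rcases hmin k i hk h hvi with h1 | ⟨h1, _⟩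
      · exact absurd (h1.trans hk) (lt_irrefl i)
      · exact hki h1.symm
    · exact hki hk
    · rcases hmin i k hk hvi h with h1 | ⟨_, h2⟩
      · exact lt_irrefl i h1
      · exact absurd (h2.trans_lt hkj) (lt_irrefl j)
  set S : Finset V := (Finset.univ.filter (fun k : Fin ω => k < j ∧ k ≠ i)).image f with hS
  have hdisj : Disjoint t S := by
    rw [Finset.disjoint_right]
    intro v hvS hvt
    obtain ⟨hv0, _, _, _⟩ := hsub hvt
    simp only [hS, Finset.mem_image] at hvS
    obtain ⟨k, _, hk⟩ := hvS
    exact hv0 ⟨k, hk⟩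
  have hSc : S.card = (j : ℕ) - 1 := by
    rw [hS, Finset.card_image_of_injective _ f.injective]
    have : Finset.univ.filter (fun k : Fin ω => k < j ∧ k ≠ i) =
        (Finset.univ.filter (fun k : Fin ω => k < j)).erase i := by
      ext k
      simp only [Finset.mem_filter, Finset.mem_erase, Finset.mem_univ, true_and]
      tauto
    rw [this, Finset.card_erase_of_mem (by simp [hij])]
    congr 1
    have : Finset.univ.filter (fun k : Fin ω => k < j) = Finset.Iio j := by
      ext k; simp
    rw [this, Fin.card_Iio]
  have hclique : G.IsClique ((t ∪ S : Finset V) : Set V) := by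
    intro x hx y hy hxy
    simp only [Finset.coe_union, Set.mem_union, Finset.mem_coe, hS,
      Finset.coe_image, Set.mem_image, Finset.mem_coe, Finset.mem_filter,
      Finset.mem_univ, true_and] at hx hy
    rcases hx with hx | ⟨k, ⟨hk1, hk2⟩, rfl⟩
    · rcases hy with hy | ⟨l, ⟨hl1, hl2⟩, rfl⟩
      · exact ht hx hy hxy
      · exact key x hx l hl1 hl2
    · rcases hy with hy | ⟨l, ⟨hl1, hl2⟩, rfl⟩
      · exact (key y hy k hk1 hk2).symm
      · exact hA ⟨k, rfl⟩ ⟨l, rfl⟩ hxy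
  have := hmax (t ∪ S) hclique
  rw [Finset.card_union_of_disjoint hdisj, hSc] at this
  have hj1 : 1 ≤ (j : ℕ) := Nat.one_le_iff_ne_zero.mpr (by
    intro h
    have : (i : ℕ) < (j : ℕ) := hij
    omega)
  omega
end

section
/- Let G be a diamond-free graph with maximum clique A = {1,…,ω} and C_{ij} sets defined as usual. Then C_{ij} = ∅ for every j ≥ 4. -/
/-!
A vertex `v ∈ C_{ij}` misses `f i` and `f j` but, by the minimality of `(i, j)`, sees every other
clique vertex `f k` with `k < j`. As `j ≥ 3` there are two such vertices `f a`, `f b`, and then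
`v, f j, f a, f b` induce a diamond whose missing edge is `v — f j`.
-/

open SimpleGraph

lemma isInducedCopy_diamondG {V : Type*} {G : SimpleGraph V} {x a b c : V} (hxa : x ≠ a)
    (hnxa : ¬ G.Adj x a) (hxb : G.Adj x b) (hxc : G.Adj x c) (hab : G.Adj a b)
    (hac : G.Adj a c) (hbc : G.Adj b c) : IsInducedCopy diamondG G := by
  refine ⟨⟨![x, a, b, c], fun p q hpq => ?_⟩, fun p q => ?_⟩
  · fin_cases p <;> fin_cases q <;>
      simp_all [hxb.ne, hxc.ne, hab.ne, hac.ne, hbc.ne, hxb.ne', hxc.ne', hab.ne', hac.ne', hbc.ne',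
        hxa.symm]
  · change G.Adj (![x, a, b, c] p) (![x, a, b, c] q) ↔ _
    fin_cases p <;> fin_cases q <;>
      simp [diamondG, hnxa, mt G.adj_symm hnxa, hxb, hxc, hab, hac, hbc, hxb.symm, hxc.symm,
        hab.symm, hac.symm, hbc.symm]

lemma adj_of_mem_Cset {V : Type*} {G : SimpleGraph V} {ω : ℕ} {f : Fin ω ↪ V} {i j k : Fin ω}
    {v : V} (hv : v ∈ Cset G f i j) (hkj : k < j) (hki : k ≠ i) : G.Adj v (f k) := by
  obtain ⟨-, hvi, -, hlex⟩ := hv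
  by_contra hvk
  rcases hki.lt_or_gt with hk | hk
  · rcases hlex k i hk hvk hvi with h | ⟨h, -⟩ <;> order
  · rcases hlex i k hk hvi hvk with h | ⟨-, h⟩ <;> order

theorem stmt9_general {V : Type*} (G : SimpleGraph V) {ω : ℕ} (f : Fin ω ↪ V)
    (hA : G.IsClique (Set.range f))
    (hdiam : _root_.Free G diamondG) (i j : Fin ω) (hj : 4 ≤ (j : ℕ) + 1) :
    Cset G f i j = ∅ := by
  refine Set.eq_empty_of_forall_notMem fun v hv => hdiam ?_
  have hcard : 1 < ((Finset.Iio j).erase i).card := by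
    have := Finset.pred_card_le_card_erase (s := Finset.Iio j) (a := i)
    rw [Fin.card_Iio] at this
    omega
  obtain ⟨a, ha, b, hb, hab⟩ := Finset.one_lt_card.1 hcard
  rw [Finset.mem_erase, Finset.mem_Iio] at ha hb
  have hclique {p q : Fin ω} (hpq : p ≠ q) : G.Adj (f p) (f q) :=
    hA (Set.mem_range_self p) (Set.mem_range_self q) (f.injective.ne hpq)
  exact isInducedCopy_diamondG (fun h => hv.1 ⟨j, h.symm⟩) hv.2.2.1
    (adj_of_mem_Cset hv ha.2 ha.1) (adj_of_mem_Cset hv hb.2 hb.1)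
    (hclique ha.2.ne') (hclique hb.2.ne') (hclique hab)

theorem stmt9 {V : Type*} [Fintype V] (G : SimpleGraph V) {ω : ℕ} (f : Fin ω ↪ V)
    (hA : G.IsClique (Set.range f))
    (hmax : ∀ t : Finset V, G.IsClique (t : Set V) → t.card ≤ ω)
    (hdiam : _root_.Free G diamondG) (i j : Fin ω) (hij : i < j) (hj : 4 ≤ (j : ℕ) + 1) :
    Cset G f i j = ∅ :=
  stmt9_general G f hA hdiam i j hj
end

section
/- If G is a (P₃ ∪ P₂, diamond)-free graph with clique number ω = 2, then χ(G) ≤ 4. -/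
/-!
A graph with `ω = 2` is triangle-free, so every neighbourhood is an independent set. If `G` has an
induced path `a - b - c`, colour each vertex by one of `a, b, c` it is adjacent to, and use a
fourth colour for the vertices adjacent to none of them: an edge among the latter would complete
an induced `P₃ ∪ P₂`. Otherwise no vertex has two neighbours, so `G` is a matching, hence
2-colourable.
-/

open SimpleGraph

namespace SimpleGraph

variable {V : Type*} {G : SimpleGraph V}

lemma cliqueFree_of_cliqueNum_lt [Finite V] {n : ℕ} (h : G.cliqueNum < n) : G.CliqueFree n :=
  fun _ hs => (hs.card_eq ▸ hs.isClique.card_le_cliqueNum).not_gt h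

lemma CliqueFree.not_adj_of_adj_of_adj (hG : G.CliqueFree 3) {a b c : V}
    (hab : G.Adj a b) (hbc : G.Adj b c) : ¬ G.Adj a c :=
  fun hac => by classical exact hG {a, b, c} (is3Clique_triple_iff.2 ⟨hab, hac, hbc⟩)

lemma isAcyclic_of_subsingleton_neighborSet (h : ∀ v, (G.neighborSet v).Subsingleton) :
    G.IsAcyclic :=
  fun v _ hc => hc.snd_ne_penultimate <|
    h v (Walk.adj_snd hc.not_nil) (Walk.adj_penultimate hc.not_nil).symm

lemma colorable_succ_of_isIndepSet_commonNonNeighbors (hG : G.CliqueFree 3) {k : ℕ}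
    (x : Fin k → V) (hx : G.IsIndepSet {v | ∀ i, ¬ G.Adj v (x i)}) : G.Colorable (k + 1) := by
  classical
  -- Any neighbour among the `x i` will do: adjacent vertices sharing one would span a triangle.
  let color (v : V) : Fin (k + 1) :=
    if h : ∃ i, G.Adj v (x i) then h.choose.castSucc else Fin.last k
  refine ⟨Coloring.mk color fun {v w} hvw hcol => ?_⟩
  by_cases hv : ∃ i, G.Adj v (x i) <;> by_cases hw : ∃ i, G.Adj w (x i) <;>
    simp only [color, hv, hw, dite_true, dite_false] at hcol
  · have hi : hv.choose = hw.choose := Fin.castSucc_injective k hcol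
    exact hG.not_adj_of_adj_of_adj hvw (hi ▸ hw.choose_spec) hv.choose_spec
  · exact Fin.castSucc_ne_last _ hcol
  · exact Fin.castSucc_ne_last _ hcol.symm
  · push Not at hv hw
    exact hx hv hw hvw.ne hvw

end SimpleGraph

lemma isIndepSet_commonNonNeighbors_of_free_P3UP2 {V : Type*} {G : SimpleGraph V}
    (hfree : _root_.Free G P3UP2) {a b c : V} (hab : G.Adj a b) (hbc : G.Adj b c)
    (hac : ¬ G.Adj a c) (hne : a ≠ c) : G.IsIndepSet {v | ∀ i, ¬ G.Adj v (![a, b, c] i)} := by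
  intro v hv w hw _ hvw
  have hva : ¬ G.Adj v a := hv 0
  have hvb : ¬ G.Adj v b := hv 1
  have hvc : ¬ G.Adj v c := hv 2
  have hwa : ¬ G.Adj w a := hw 0
  have hwb : ¬ G.Adj w b := hw 1
  have hwc : ¬ G.Adj w c := hw 2
  refine hfree ⟨⟨![a, b, c, v, w], ?_⟩, fun i j => ?_⟩
  · intro i j hij
    fin_cases i <;> fin_cases j <;> simp at hij ⊢ <;> grind [Adj.ne, Adj.symm]
  · show G.Adj (![a, b, c, v, w] i) (![a, b, c, v, w] j) ↔ _
    fin_cases i <;> fin_cases j <;> simp [P3UP2, fromRel_adj] <;> grind [Adj.symm]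

theorem stmt11_general {V : Type*} [Fintype V] (G : SimpleGraph V) (h1 : _root_.Free G P3UP2)
    (hω : G.cliqueNum = 2) :
    G.chromaticNumber ≤ (4 : ℕ∞) := by
  have hG : G.CliqueFree 3 := cliqueFree_of_cliqueNum_lt (by omega)
  suffices hcol : G.Colorable 4 from mod_cast hcol.chromaticNumber_le
  by_cases hP3 : ∃ a b c, G.Adj a b ∧ G.Adj b c ∧ a ≠ c
  · obtain ⟨a, b, c, hab, hbc, hne⟩ := hP3
    exact colorable_succ_of_isIndepSet_commonNonNeighbors hG ![a, b, c] <|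
      isIndepSet_commonNonNeighbors_of_free_P3UP2 h1 hab hbc
        (hG.not_adj_of_adj_of_adj hab hbc) hne
  · push Not at hP3
    have hacyclic : G.IsAcyclic := isAcyclic_of_subsingleton_neighborSet
      fun b a hba c hbc => hP3 a b c hba.symm hbc
    exact hacyclic.colorable_two.mono (by norm_num)

theorem stmt11 {V : Type*} [Fintype V] (G : SimpleGraph V) (h1 : _root_.Free G P3UP2)
    (h2 : _root_.Free G diamondG) (hω : G.cliqueNum = 2) :
    G.chromaticNumber ≤ (4 : ℕ∞) :=
  stmt11_general G h1 hω
end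

section
/- If G is a (P₃ ∪ P₂, diamond)-free graph with clique number ω = 3, then χ(G) ≤ 6. -/
open SimpleGraph

/-
Fix an edge `ab`. Every vertex lies in `N(b)`, in `N(a) \ N(b)`, or in the set `R` of common
non-neighbours of `a` and `b`. Diamond-freeness makes every neighbourhood a disjoint union of
cliques, of size at most 2 since `G` is `K₄`-free; `(P₃ ∪ P₂)`-freeness, applied with the edge
`ab`, makes `G[R]` a disjoint union of cliques of size at most 3. Colouring these cluster graphs
greedily takes 2 + 2 + 3 colours, and one is saved because a vertex on a triangle of `R` has no
neighbour `w` in `N(a) \ N(b)`: `w` would form a `K₄` or a diamond with the triangle, or else the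
path `b a w` and an edge of the triangle would induce `P₃ ∪ P₂`.
-/

section

variable {V : Type*} {G : SimpleGraph V}

theorem isInducedCopy_of_injective {α : Type*} {H : SimpleGraph α} (f : α → V)
    (hf : f.Injective) (hadj : ∀ i j, G.Adj (f i) (f j) ↔ H.Adj i j) : IsInducedCopy H G :=
  ⟨⟨f, hf⟩, hadj⟩

theorem Free.adj_of_diamondG (h : _root_.Free G diamondG) {a b x y : V} (hxy : G.Adj x y)
    (hax : G.Adj a x) (hay : G.Adj a y) (hbx : G.Adj b x) (hby : G.Adj b y) (hab : a ≠ b) :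
    G.Adj a b := by
  by_contra hnab
  refine h (isInducedCopy_of_injective ![a, b, x, y] (fun i j hij => ?_) fun i j => ?_)
  · fin_cases i <;> fin_cases j <;> simp_all [hax.ne, hay.ne, hbx.ne, hby.ne, hxy.ne]
  · fin_cases i <;> fin_cases j <;> simp [diamondG, *, G.adj_comm]

theorem Free.adj_of_P3UP2 (h : _root_.Free G P3UP2) {a b c d e : V} (hab : G.Adj a b)
    (hbc : G.Adj b c) (hac : a ≠ c) (hde : G.Adj d e) (had : ¬G.Adj a d) (hae : ¬G.Adj a e)
    (hbd : ¬G.Adj b d) (hbe : ¬G.Adj b e) (hcd : ¬G.Adj c d) (hce : ¬G.Adj c e) :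
    G.Adj a c := by
  by_contra hnac
  refine h (isInducedCopy_of_injective ![a, b, c, d, e] (fun i j hij => ?_) fun i j => ?_)
  · fin_cases i <;> fin_cases j <;> simp_all [hab.ne, hbc.ne, hde.ne, G.adj_comm]
  · fin_cases i <;> fin_cases j <;> simp [P3UP2, *, G.adj_comm]

/-- `G[P]` is a disjoint union of cliques. -/
def IsClusterOn (G : SimpleGraph V) (P : Set V) : Prop :=
  ∀ ⦃t u v⦄, t ∈ P → u ∈ P → v ∈ P → G.Adj t u → G.Adj u v → t ≠ v → G.Adj t v

theorem Free.isClusterOn_neighborSet (h : _root_.Free G diamondG) (a : V) :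
    IsClusterOn G (G.neighborSet a) :=
  fun _ _ _ ht hu hv htu huv htv => h.adj_of_diamondG hu.symm htu ht.symm huv.symm hv.symm htv

theorem Free.isClusterOn_setOf_not_adj (h : _root_.Free G P3UP2) {a b : V} (hab : G.Adj a b) :
    IsClusterOn G {v | ¬G.Adj a v ∧ ¬G.Adj b v} :=
  fun _ _ _ ht hu hv htu huv htv => h.adj_of_P3UP2 htu huv htv hab
    (mt Adj.symm ht.1) (mt Adj.symm ht.2) (mt Adj.symm hu.1) (mt Adj.symm hu.2)
    (mt Adj.symm hv.1) (mt Adj.symm hv.2)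

theorem SimpleGraph.IsClique.ncard_lt_of_cliqueFreeOn {P s : Set V} {n : ℕ} (hs : G.IsClique s)
    (hsP : s ⊆ P) (hfin : s.Finite) (hP : G.CliqueFreeOn P n) : s.ncard < n := by
  by_contra! hn
  obtain ⟨t, hts, htn⟩ := Set.exists_subset_card_eq hn
  have htfin := hfin.subset hts
  refine hP (t := htfin.toFinset) (by simpa using hts.trans hsP) ⟨by simpa using hs.subset hts, ?_⟩
  rw [← htn, Set.ncard_eq_toFinset_card t htfin]

theorem SimpleGraph.CliqueFree.cliqueFreeOn_neighborSet {n : ℕ} (h : G.CliqueFree (n + 1))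
    (a : V) : G.CliqueFreeOn (G.neighborSet a) n := by
  simpa using (h.cliqueFreeOn G (s := Set.univ)).of_succ G (Set.mem_univ a)

section Rank

variable [LinearOrder V]

/-- On a cluster set `P`, the colour `v` receives when `G[P]` is greedily coloured in the order
of `V`. -/
noncomputable def rankIn (G : SimpleGraph V) (P : Set V) (v : V) : ℕ :=
  {u ∈ P | G.Adj u v ∧ u < v}.ncard

variable {P : Set V} {u v : V}

theorem IsClusterOn.rankIn_lt_rankIn [Finite V] (hP : IsClusterOn G P) (hu : u ∈ P) (hv : v ∈ P)
    (huv : G.Adj u v) (hlt : u < v) : rankIn G P u < rankIn G P v := by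
  refine Set.ncard_lt_ncard ⟨fun t ⟨ht, htu, htlt⟩ => ?_, fun hsub => ?_⟩
  · exact ⟨ht, hP ht hu hv htu huv (htlt.trans hlt).ne, htlt.trans hlt⟩
  · exact (hsub ⟨hu, huv, hlt⟩).2.2.false

theorem IsClusterOn.rankIn_ne [Finite V] (hP : IsClusterOn G P) (hu : u ∈ P) (hv : v ∈ P)
    (huv : G.Adj u v) : rankIn G P u ≠ rankIn G P v := by
  rcases huv.ne.lt_or_gt with hlt | hlt
  · exact (hP.rankIn_lt_rankIn hu hv huv hlt).ne
  · exact (hP.rankIn_lt_rankIn hv hu huv.symm hlt).ne'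

theorem IsClusterOn.rankIn_lt [Finite V] {n : ℕ} (hP : IsClusterOn G P)
    (hn : G.CliqueFreeOn P (n + 1)) (hv : v ∈ P) : rankIn G P v < n := by
  have hclique : G.IsClique (insert v {u ∈ P | G.Adj u v ∧ u < v}) := by
    refine isClique_insert.2 ⟨fun t ht s hs hts => ?_, fun t ht _ => ht.2.1.symm⟩
    exact hP ht.1 hv hs.1 ht.2.1 hs.2.1.symm hts
  have := hclique.ncard_lt_of_cliqueFreeOn (Set.insert_subset hv fun _ ht => ht.1)
    (Set.toFinite _) hn
  rwa [Set.ncard_insert_of_notMem (fun hv' => hv'.2.2.false), Nat.add_lt_add_iff_right] at this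

theorem IsClusterOn.exists_triangle_of_one_lt_rankIn [Finite V] (hP : IsClusterOn G P)
    (hv : v ∈ P) (h : 1 < rankIn G P v) :
    ∃ u₁ ∈ P, ∃ u₂ ∈ P, G.Adj u₁ u₂ ∧ G.Adj u₁ v ∧ G.Adj u₂ v := by
  obtain ⟨u₁, u₂, ⟨hu₁, hu₁v, -⟩, ⟨hu₂, hu₂v, -⟩, hne⟩ := (Set.one_lt_ncard_iff).1 h
  exact ⟨u₁, hu₁, u₂, hu₂, hP hu₁ hv hu₂ hu₁v hu₂v.symm hne, hu₁v, hu₂v⟩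

end Rank

theorem Free.not_adj_of_triangle (h1 : _root_.Free G P3UP2) (h2 : _root_.Free G diamondG)
    (h4 : G.CliqueFree 4) {a b w v u₁ u₂ : V} (hab : G.Adj a b) (haw : G.Adj a w)
    (hbw : ¬G.Adj b w) (hv : ¬G.Adj a v ∧ ¬G.Adj b v) (hu₁ : ¬G.Adj a u₁ ∧ ¬G.Adj b u₁)
    (hu₂ : ¬G.Adj a u₂ ∧ ¬G.Adj b u₂) (hu₁₂ : G.Adj u₁ u₂) (hu₁v : G.Adj u₁ v)
    (hu₂v : G.Adj u₂ v) : ¬G.Adj v w := by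
  classical
  intro hvw
  have hwu₁ : w ≠ u₁ := by rintro rfl; exact hu₁.1 haw
  have hwu₂ : w ≠ u₂ := by rintro rfl; exact hu₂.1 haw
  by_cases h₁ : G.Adj u₁ w <;> by_cases h₂ : G.Adj u₂ w
  · exact h4 _ ((is3Clique_triple_iff.2 ⟨hu₁₂, hu₁v, hu₂v⟩).insert (a := w)
      (by simp [h₁.symm, h₂.symm, hvw.symm]))
  · exact h₂ (h2.adj_of_diamondG hu₁v hu₁₂.symm hu₂v h₁.symm hvw.symm hwu₂.symm)
  · exact h₁ (h2.adj_of_diamondG hu₂v hu₁₂ hu₁v h₂.symm hvw.symm hwu₁.symm)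
  · have hbw' : b ≠ w := by rintro rfl; exact hv.2 hvw.symm
    exact hbw (h1.adj_of_P3UP2 hab.symm haw hbw' hu₁₂ hu₁.2 hu₂.2 hu₁.1 hu₂.1
      (mt Adj.symm h₁) (mt Adj.symm h₂))

section SixColor

variable [LinearOrder V] {a b : V}

open scoped Classical in
noncomputable def sixColor (G : SimpleGraph V) (a b v : V) : ℕ :=
  if G.Adj b v then 3 + rankIn G (G.neighborSet b) v
  else if G.Adj a v then (if rankIn G (G.neighborSet a) v = 0 then 5 else 2)
  else rankIn G {x | ¬G.Adj a x ∧ ¬G.Adj b x} v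

theorem sixColor_cases [Finite V] (h1 : _root_.Free G P3UP2) (h2 : _root_.Free G diamondG)
    (h4 : G.CliqueFree 4) (hab : G.Adj a b) (v : V) :
    (G.Adj b v ∧ sixColor G a b v = 3 + rankIn G (G.neighborSet b) v ∧
      rankIn G (G.neighborSet b) v < 2) ∨
    (G.Adj a v ∧ ¬G.Adj b v ∧
      (sixColor G a b v = 5 ∧ rankIn G (G.neighborSet a) v = 0 ∨
        sixColor G a b v = 2 ∧ rankIn G (G.neighborSet a) v = 1)) ∨
    ((¬G.Adj a v ∧ ¬G.Adj b v) ∧ sixColor G a b v = rankIn G {x | ¬G.Adj a x ∧ ¬G.Adj b x} v ∧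
      rankIn G {x | ¬G.Adj a x ∧ ¬G.Adj b x} v < 3) := by
  by_cases hb : G.Adj b v
  · exact Or.inl ⟨hb, by simp [sixColor, hb],
      (h2.isClusterOn_neighborSet b).rankIn_lt (h4.cliqueFreeOn_neighborSet b) hb⟩
  by_cases ha : G.Adj a v
  · have := (h2.isClusterOn_neighborSet a).rankIn_lt (h4.cliqueFreeOn_neighborSet a) ha
    refine Or.inr (Or.inl ⟨ha, hb, ?_⟩)
    simp only [sixColor, hb, ha, if_false, if_true]
    split_ifs <;> omega
  · exact Or.inr (Or.inr ⟨⟨ha, hb⟩, by simp [sixColor, ha, hb],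
      (h1.isClusterOn_setOf_not_adj hab).rankIn_lt (h4.cliqueFreeOn G) ⟨ha, hb⟩⟩)

theorem sixColor_ne [Finite V] (h1 : _root_.Free G P3UP2) (h2 : _root_.Free G diamondG)
    (h4 : G.CliqueFree 4) (hab : G.Adj a b) {u v : V} (huv : G.Adj u v) :
    sixColor G a b u ≠ sixColor G a b v := by
  have hR := h1.isClusterOn_setOf_not_adj hab
  have hN := h2.isClusterOn_neighborSet
  have hshared (v w : V) (hv : ¬G.Adj a v ∧ ¬G.Adj b v)
      (hrv : 1 < rankIn G {x | ¬G.Adj a x ∧ ¬G.Adj b x} v) (haw : G.Adj a w)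
      (hbw : ¬G.Adj b w) : ¬G.Adj v w := by
    obtain ⟨u₁, hu₁, u₂, hu₂, hu₁₂, hu₁v, hu₂v⟩ := hR.exists_triangle_of_one_lt_rankIn hv hrv
    exact h1.not_adj_of_triangle h2 h4 hab haw hbw hv hu₁ hu₂ hu₁₂ hu₁v hu₂v
  intro heq
  rcases sixColor_cases h1 h2 h4 hab u with ⟨hu, hcu, hru⟩ | ⟨hu, hu', hcu⟩ | ⟨hu, hcu, hru⟩ <;>
    rcases sixColor_cases h1 h2 h4 hab v with ⟨hv, hcv, hrv⟩ | ⟨hv, hv', hcv⟩ | ⟨hv, hcv, hrv⟩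
  · exact (hN b).rankIn_ne hu hv huv (by omega)
  · omega
  · omega
  · omega
  · exact (hN a).rankIn_ne hu hv huv (by omega)
  · exact hshared v u hv (by omega) hu hu' huv.symm
  · omega
  · exact hshared u v hu (by omega) hv hv' huv
  · exact hR.rankIn_ne hu hv huv (by omega)

end SixColor

theorem colorable_six_of_free [Finite V] (h1 : _root_.Free G P3UP2)
    (h2 : _root_.Free G diamondG) (h4 : G.CliqueFree 4) {a b : V} (hab : G.Adj a b) :
    G.Colorable 6 := by
  let _ : LinearOrder V := LinearOrder.lift' _ (Finite.equivFin V).injective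
  refine ⟨Coloring.mk (fun v => ⟨sixColor G a b v, ?_⟩) fun huv heq =>
    sixColor_ne h1 h2 h4 hab huv (congrArg Fin.val heq)⟩
  rcases sixColor_cases h1 h2 h4 hab v with h | h | h <;> omega

end

theorem stmt13 {V : Type*} [Fintype V] (G : SimpleGraph V) (h1 : _root_.Free G P3UP2)
    (h2 : _root_.Free G diamondG) (hω : G.cliqueNum = 3) :
    G.chromaticNumber ≤ (6 : ℕ∞) := by
  classical
  obtain ⟨s, hs⟩ := G.exists_isNClique_cliqueNum
  rw [hω, is3Clique_iff] at hs
  obtain ⟨a, b, -, hab, -, -, -⟩ := hs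
  have h4 : G.CliqueFree 4 := fun t ht => by
    have := ht.isClique.card_le_cliqueNum
    rw [ht.card_eq, hω] at this
    omega
  exact_mod_cast (colorable_six_of_free h1 h2 h4 hab).chromaticNumber_le
end

section
/- Let G be a (P₃ ∪ P₂, diamond)-free graph with ω(G) ≥ 4 and maximum clique A = {1,…,ω}, with C_{ij} sets defined as usual. If there is an edge between C₂₃ and C₁₃, then both C₂₃ and C₁₃ are independent sets. -/
/-
Every vertex of `C₂₃` sees `1` and misses `2`, so by diamond-freeness it misses every other
vertex of the clique `A`; likewise a vertex of `C₁₃` sees only `2`. Fix `b ∈ C₁₃` and an edge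
`xy` inside `C₂₃`. If `b` sees both `x` and `y`, then `b, 1, x, y` induce a diamond; if it sees
exactly one of them, the induced path through `x, y, b` together with the edge `3 4` of `A` is an
induced `P₃ ∪ P₂`; if it sees neither, the path `b 2 3` and the edge `xy` are. The case of `C₁₃`
is symmetric.
-/

open SimpleGraph

namespace Free

variable {V : Type*} {G : SimpleGraph V}

theorem adj_of_diamond (h : _root_.Free G diamondG) {u v w₁ w₂ : V} (huv : u ≠ v)
    (hu₁ : G.Adj u w₁) (hu₂ : G.Adj u w₂) (hv₁ : G.Adj v w₁) (hv₂ : G.Adj v w₂)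
    (hw : G.Adj w₁ w₂) : G.Adj u v := by
  by_contra hnuv
  have := hu₁.ne; have := hu₂.ne; have := hv₁.ne; have := hv₂.ne; have := hw.ne
  apply h
  refine ⟨⟨![u, v, w₁, w₂], ?_⟩, ?_⟩
  · intro i j hij
    fin_cases i <;> fin_cases j <;> simp_all
  · intro i j
    change G.Adj (![u, v, w₁, w₂] i) (![u, v, w₁, w₂] j) ↔ _
    fin_cases i <;> fin_cases j <;> simp_all [diamondG, fromRel_adj, adj_comm]

theorem false_of_P3UP2 (h : _root_.Free G P3UP2) {p₀ p₁ p₂ e₀ e₁ : V}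
    (h₀₁ : G.Adj p₀ p₁) (h₁₂ : G.Adj p₁ p₂) (h₀₂ : ¬ G.Adj p₀ p₂) (hp : p₀ ≠ p₂)
    (he : G.Adj e₀ e₁)
    (h₀e₀ : ¬ G.Adj p₀ e₀) (h₀e₁ : ¬ G.Adj p₀ e₁) (h₁e₀ : ¬ G.Adj p₁ e₀)
    (h₁e₁ : ¬ G.Adj p₁ e₁) (h₂e₀ : ¬ G.Adj p₂ e₀) (h₂e₁ : ¬ G.Adj p₂ e₁) : False := by
  have := h₀₁.ne; have := h₁₂.ne; have := he.ne
  have : p₀ ≠ e₀ := fun h => h₀e₁ (h ▸ he)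
  have : p₀ ≠ e₁ := fun h => h₀e₀ (h ▸ he.symm)
  have : p₁ ≠ e₀ := fun h => h₁e₁ (h ▸ he)
  have : p₁ ≠ e₁ := fun h => h₁e₀ (h ▸ he.symm)
  have : p₂ ≠ e₀ := fun h => h₂e₁ (h ▸ he)
  have : p₂ ≠ e₁ := fun h => h₂e₀ (h ▸ he.symm)
  apply h
  refine ⟨⟨![p₀, p₁, p₂, e₀, e₁], ?_⟩, ?_⟩
  · intro i j hij
    fin_cases i <;> fin_cases j <;> simp_all
  · intro i j
    change G.Adj (![p₀, p₁, p₂, e₀, e₁] i) (![p₀, p₁, p₂, e₀, e₁] j) ↔ _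
    fin_cases i <;> fin_cases j <;> simp_all [P3UP2, fromRel_adj, adj_comm]

theorem eq_of_adj_of_isClique (h : _root_.Free G diamondG) {S : Set V} (hS : G.IsClique S)
    {p q v w : V} (hp : p ∈ S) (hq : q ∈ S) (hv : v ∉ S) (hvp : G.Adj v p) (hvq : ¬ G.Adj v q)
    (hw : w ∈ S) (hvw : G.Adj v w) : w = p := by
  by_contra hwp
  have hwq : w ≠ q := fun hwq => hvq (hwq ▸ hvw)
  have hpq : p ≠ q := fun hpq => hvq (hpq ▸ hvp)
  exact hvq (h.adj_of_diamond (fun hvq => hv (hvq ▸ hq)) hvp hvw (hS hq hp hpq.symm)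
    (hS hq hw hwq.symm) (hS hp hw (Ne.symm hwp)))

end Free

theorem not_adj_of_same_private_clique_neighbor {V : Type*} {G : SimpleGraph V}
    (h₁ : _root_.Free G P3UP2) (h₂ : _root_.Free G diamondG) {S : Set V} (hS : G.IsClique S)
    {p q r s x y b : V} (hp : p ∈ S) (hq : q ∈ S) (hr : r ∈ S) (hs : s ∈ S)
    (hsp : s ≠ p) (hsq : s ≠ q) (hsr : s ≠ r)
    (hx : x ∉ S) (hxp : G.Adj x p) (hxq : ¬ G.Adj x q) (hxr : ¬ G.Adj x r)
    (hy : y ∉ S) (hyp : G.Adj y p) (hyq : ¬ G.Adj y q) (hyr : ¬ G.Adj y r)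
    (hb : b ∉ S) (hbq : G.Adj b q) (hbp : ¬ G.Adj b p) (hbr : ¬ G.Adj b r) :
    ¬ G.Adj x y := by
  intro hxy
  have hxs : ¬ G.Adj x s := fun h => hsp (h₂.eq_of_adj_of_isClique hS hp hq hx hxp hxq hs h)
  have hys : ¬ G.Adj y s := fun h => hsp (h₂.eq_of_adj_of_isClique hS hp hq hy hyp hyq hs h)
  have hbs : ¬ G.Adj b s := fun h => hsq (h₂.eq_of_adj_of_isClique hS hq hp hb hbq hbp hs h)
  have hrs : G.Adj r s := hS hr hs hsr.symm
  by_cases hxb : G.Adj x b <;> by_cases hyb : G.Adj y b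
  · exact hbp (h₂.adj_of_diamond (fun h => hb (h ▸ hp)) hxb.symm hyb.symm hxp.symm hyp.symm hxy)
  · exact h₁.false_of_P3UP2 hxy.symm hxb hyb (fun h => hbp (h ▸ hyp)) hrs hyr hys hxr hxs hbr hbs
  · exact h₁.false_of_P3UP2 hxy hyb hxb (fun h => hbp (h ▸ hxp)) hrs hxr hxs hyr hys hbr hbs
  · have hqr : G.Adj q r := hS hq hr fun h => hbr (h ▸ hbq)
    exact h₁.false_of_P3UP2 hbq hqr hbr (fun h => hb (h ▸ hr)) hxy
      (fun h => hxb h.symm) (fun h => hyb h.symm) (fun h => hxq h.symm) (fun h => hyq h.symm)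
      (fun h => hxr h.symm) (fun h => hyr h.symm)

theorem stmt16_general {V : Type*} (G : SimpleGraph V) {ω : ℕ} (hω : 4 ≤ ω)
    (f : Fin ω ↪ V) (hA : G.IsClique (Set.range f))
    (h1 : _root_.Free G P3UP2) (h2 : _root_.Free G diamondG)
    (v1 v2 v3 : Fin ω)
    (hv1 : (v1 : ℕ) = 0) (hv2 : (v2 : ℕ) = 1) (hv3 : (v3 : ℕ) = 2)
    (C23 C13 : Set V)
    (hC23 : C23 = {v | v ∉ Set.range f ∧ ¬ G.Adj v (f v2) ∧ ¬ G.Adj v (f v3) ∧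
      G.Adj v (f v1)})
    (hC13 : C13 = {v | v ∉ Set.range f ∧ ¬ G.Adj v (f v1) ∧ ¬ G.Adj v (f v3) ∧
      G.Adj v (f v2)})
    (hedge : ∃ a ∈ C23, ∃ b ∈ C13, G.Adj a b) :
    (∀ x ∈ C23, ∀ y ∈ C23, ¬ G.Adj x y) ∧ (∀ x ∈ C13, ∀ y ∈ C13, ¬ G.Adj x y) := by
  subst hC23 hC13
  obtain ⟨a, ⟨ha, ha2, ha3, ha1⟩, b, ⟨hb, hb1, hb3, hb2⟩, -⟩ := hedge
  have hf : ∀ {i j : Fin ω}, (i : ℕ) ≠ j → f i ≠ f j := fun h => f.injective.ne (Fin.ne_of_val_ne h)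
  let k : Fin ω := ⟨3, by omega⟩
  have hk : (k : ℕ) = 3 := rfl
  constructor
  · rintro x ⟨hx, hx2, hx3, hx1⟩ y ⟨hy, hy2, hy3, hy1⟩
    exact not_adj_of_same_private_clique_neighbor h1 h2 hA (Set.mem_range_self v1) (Set.mem_range_self v2)
      (Set.mem_range_self v3) (Set.mem_range_self k) (hf (by omega)) (hf (by omega))
      (hf (by omega)) hx hx1 hx2 hx3 hy hy1 hy2 hy3 hb hb2 hb1 hb3
  · rintro x ⟨hx, hx1, hx3, hx2⟩ y ⟨hy, hy1, hy3, hy2⟩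
    exact not_adj_of_same_private_clique_neighbor h1 h2 hA (Set.mem_range_self v2) (Set.mem_range_self v1)
      (Set.mem_range_self v3) (Set.mem_range_self k) (hf (by omega)) (hf (by omega))
      (hf (by omega)) hx hx2 hx1 hx3 hy hy2 hy1 hy3 ha ha1 ha2 ha3

theorem stmt16 {V : Type*} [Fintype V] (G : SimpleGraph V) {ω : ℕ} (hω : 4 ≤ ω)
    (f : Fin ω ↪ V) (hA : G.IsClique (Set.range f))
    (hmax : ∀ t : Finset V, G.IsClique (t : Set V) → t.card ≤ ω)
    (h1 : _root_.Free G P3UP2) (h2 : _root_.Free G diamondG)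
    (v1 v2 v3 : Fin ω) (h12 : v1 < v2) (h23 : v2 < v3)
    (hv1 : (v1 : ℕ) = 0) (hv2 : (v2 : ℕ) = 1) (hv3 : (v3 : ℕ) = 2)
    (C23 C13 : Set V)
    (hC23 : C23 = {v | v ∉ Set.range f ∧ ¬ G.Adj v (f v2) ∧ ¬ G.Adj v (f v3) ∧
      G.Adj v (f v1)})
    (hC13 : C13 = {v | v ∉ Set.range f ∧ ¬ G.Adj v (f v1) ∧ ¬ G.Adj v (f v3) ∧
      G.Adj v (f v2)})
    (hedge : ∃ a ∈ C23, ∃ b ∈ C13, G.Adj a b) :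
    (∀ x ∈ C23, ∀ y ∈ C23, ¬ G.Adj x y) ∧ (∀ x ∈ C13, ∀ y ∈ C13, ¬ G.Adj x y) :=
  stmt16_general G hω f hA h1 h2 v1 v2 v3 hv1 hv2 hv3 C23 C13 hC23 hC13 hedge
end

section
/- If G is a (2K₂, diamond)-free graph with clique number ω = 2, then χ(G) ≤ 3. -/
open SimpleGraph

/-
A triangle-free graph is 3-colourable as soon as two vertices `x`, `y` meet every edge in the
sense that each edge has an endpoint adjacent to `x` or `y`: colour `N(x)`, then `N(y) \ N(x)`,
then the rest, each class being independent. In a `2K₂`-free graph every edge `xy` has this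
property, and `ω = 2` provides both an edge and triangle-freeness.
-/

namespace SimpleGraph

variable {V : Type*} {G : SimpleGraph V}

lemma cliqueFree_of_cliqueNum_lt_s17 {n : ℕ} (h0 : 0 < G.cliqueNum) (hn : G.cliqueNum < n) :
    G.CliqueFree n := by
  have hbdd : BddAbove {n | ∃ s, G.IsNClique n s} := by
    by_contra h
    simp [cliqueNum, Nat.sSup_of_not_bddAbove h] at h0
  exact fun s hs => (le_csSup hbdd ⟨s, hs⟩).not_gt hn

lemma CliqueFree.colorable_three_of_dominating_pair (hG : G.CliqueFree 3) (x y : V)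
    (hdom : ∀ u v, G.Adj u v → G.Adj u x ∨ G.Adj u y ∨ G.Adj v x ∨ G.Adj v y) :
    G.Colorable 3 := by
  classical
  have triangle : ∀ {a b c}, G.Adj a b → G.Adj a c → G.Adj b c → False :=
    fun hab hac hbc => hG _ (is3Clique_triple_iff.mpr ⟨hab, hac, hbc⟩)
  refine ⟨Coloring.mk (fun v : V => (if G.Adj v x then 0 else if G.Adj v y then 1 else 2 : Fin 3))
    fun {u v} huv => ?_⟩
  by_cases hux : G.Adj u x <;> by_cases hvx : G.Adj v x <;>
    by_cases huy : G.Adj u y <;> by_cases hvy : G.Adj v y <;>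
    simp only [hux, hvx, huy, hvy, if_true, if_false] <;>
    first
      | decide
      | exact fun _ => triangle huv hux hvx
      | exact fun _ => triangle huv huy hvy
      | exact fun _ => by simpa [hux, huy, hvx, hvy] using hdom u v huv

end SimpleGraph

-- No disjointness is assumed: a shared endpoint, say `u = x`, already gives `G.Adj u y`.
lemma Free.edges_joined_of_twoK2 {V : Type*} {G : SimpleGraph V} (h : _root_.Free G twoK2)
    {u v x y : V} (huv : G.Adj u v) (hxy : G.Adj x y) :
    G.Adj u x ∨ G.Adj u y ∨ G.Adj v x ∨ G.Adj v y := by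
  by_contra! hno
  obtain ⟨hux, huy, hvx, hvy⟩ := hno
  have hinj : Function.Injective ![u, v, x, y] := by
    intro a b hab
    fin_cases a <;> fin_cases b <;> simp at hab ⊢ <;> subst_vars <;> simp_all [G.adj_comm]
  refine h ⟨⟨_, hinj⟩, fun a b => ?_⟩
  fin_cases a <;> fin_cases b <;> simp [twoK2, G.adj_comm, *]

theorem stmt17_general {V : Type*} (G : SimpleGraph V) (h1 : _root_.Free G twoK2)
    (hω : G.cliqueNum = 2) :
    G.chromaticNumber ≤ (3 : ℕ∞) := by
  classical
  obtain ⟨s, hs⟩ := G.exists_isNClique_cliqueNum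
  rw [hω] at hs
  obtain ⟨x, y, hne, rfl⟩ := Finset.card_eq_two.mp hs.card_eq
  have hxy : G.Adj x y := hs.isClique (by simp) (by simp) hne
  have hfree : G.CliqueFree 3 := cliqueFree_of_cliqueNum_lt_s17 (by omega) (by omega)
  have hcol := hfree.colorable_three_of_dominating_pair x y
    fun _ _ huv => h1.edges_joined_of_twoK2 huv hxy
  exact_mod_cast hcol.chromaticNumber_le

theorem stmt17 {V : Type*} [Fintype V] (G : SimpleGraph V) (h1 : _root_.Free G twoK2)
    (h2 : _root_.Free G diamondG) (hω : G.cliqueNum = 2) :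
    G.chromaticNumber ≤ (3 : ℕ∞) :=
  stmt17_general G h1 hω
end

section
/- If G is a (2K₂, diamond)-free graph with clique number ω ≥ 3, then χ(G) = ω. -/
open SimpleGraph

/-!
Fix a maximum clique `S`. Maximality and diamond-freeness leave every vertex outside `S` with at
most one neighbour in `S`; `2K₂`-freeness and `|S| ≥ 3` give the two ends of every edge outside `S`
neighbours in `S`, and distinct ones. So colouring `S` by itself and each outside vertex by the
image of its neighbour under a fixed-point-free permutation of `S` is a proper `ω`-colouring.
-/

section

variable {V : Type*} {G : SimpleGraph V}

lemma Free.adj_of_twoK2 (h : _root_.Free G twoK2) {a b c d : V}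
    (hab : G.Adj a b) (hcd : G.Adj c d) (hac : a ≠ c) (had : a ≠ d) (hbc : b ≠ c) (hbd : b ≠ d) :
    G.Adj a c ∨ G.Adj a d ∨ G.Adj b c ∨ G.Adj b d := by
  by_contra! hnot
  obtain ⟨nac, nad, nbc, nbd⟩ := hnot
  apply h
  refine ⟨⟨![a, b, c, d], ?_⟩, ?_⟩
  · intro i j hij
    fin_cases i <;> fin_cases j <;>
      simp_all [hab.ne, hab.ne', hcd.ne, hcd.ne', hac.symm, had.symm, hbc.symm, hbd.symm]
  · intro i j
    change G.Adj (![a, b, c, d] i) (![a, b, c, d] j) ↔ _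
    fin_cases i <;> fin_cases j <;>
      simp_all [twoK2, fromRel_adj, G.adj_comm]

lemma Free.adj_of_diamond_s18 (h : _root_.Free G diamondG) {x a b c : V}
    (hab : G.Adj a b) (hac : G.Adj a c) (hbc : G.Adj b c)
    (hxa : G.Adj x a) (hxb : G.Adj x b) (hxc : x ≠ c) : G.Adj x c := by
  by_contra nxc
  apply h
  refine ⟨⟨![x, c, a, b], ?_⟩, ?_⟩
  · intro i j hij
    fin_cases i <;> fin_cases j <;>
      simp_all [hab.ne, hab.ne', hac.ne, hac.ne', hbc.ne, hbc.ne', hxa.ne, hxa.ne',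
        hxb.ne, hxb.ne', hxc.symm]
  · intro i j
    change G.Adj (![x, c, a, b] i) (![x, c, a, b] j) ↔ _
    fin_cases i <;> fin_cases j <;>
      simp_all [diamondG, fromRel_adj, G.adj_comm]

lemma colorable_card_of_forall_adj_eq {s : Finset V} (hs : 1 < s.card)
    (huniq : ∀ v ∉ s, ∀ a ∈ s, ∀ b ∈ s, G.Adj v a → G.Adj v b → a = b)
    (hne : ∀ v ∉ s, ∀ w ∉ s, G.Adj v w → ∃ a ∈ s, ∃ b ∈ s, G.Adj v a ∧ G.Adj w b ∧ a ≠ b) :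
    G.Colorable s.card := by
  classical
  have : Nontrivial s := Fintype.one_lt_card_iff_nontrivial.mp (by simpa using hs)
  obtain ⟨σ, hσ, -⟩ := (Finset.univ : Finset s).exists_cycleOn
  have hσne (a : s) : σ a ≠ a := hσ.apply_ne Finset.univ_nontrivial (Finset.mem_univ a)
  have hnbr (v : V) : ∃ a : s, v ∉ s → ∀ b : s, G.Adj v b → b = a := by
    by_cases h : ∃ a : s, G.Adj v a
    · obtain ⟨a, hva⟩ := h
      exact ⟨a, fun hv b hvb => Subtype.ext (huniq v hv b b.2 a a.2 hvb hva)⟩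
    · exact ⟨Classical.arbitrary s, fun _ b hvb => (h ⟨b, hvb⟩).elim⟩
  choose nbr hnbr using hnbr
  let c : V → s := fun v => if hv : v ∈ s then ⟨v, hv⟩ else σ (nbr v)
  refine Fintype.card_coe s ▸ (Coloring.mk c fun {v w} hvw hc => ?_).colorable
  by_cases hv : v ∈ s <;> by_cases hw : w ∈ s <;> simp only [c, hv, hw, dite_true, dite_false] at hc
  · exact hvw.ne (congrArg Subtype.val hc)
  · exact hσne ⟨v, hv⟩ (hnbr w hw ⟨v, hv⟩ hvw.symm ▸ hc.symm)
  · exact hσne ⟨w, hw⟩ (hnbr v hv ⟨w, hw⟩ hvw ▸ hc)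
  · obtain ⟨a, ha, b, hb, hva, hwb, hab⟩ := hne v hv w hw hvw
    rw [← hnbr v hv ⟨a, ha⟩ hva, ← hnbr w hw ⟨b, hb⟩ hwb] at hc
    exact hab (congrArg Subtype.val (σ.injective hc))

namespace SimpleGraph.IsMaximumClique

variable [Finite V] {s : Finset V} {v w a b : V}

lemma exists_not_adj (hs : G.IsMaximumClique s) (hv : v ∉ s) : ∃ a ∈ s, ¬ G.Adj v a := by
  by_contra! h
  have hins : G.IsClique (insert v (s : Set V)) :=
    isClique_insert.mpr ⟨hs.isClique, fun b hb _ => h b hb⟩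
  exact hv ((hs.isMaximalClique s).2 hins (Set.subset_insert _ _) (Set.mem_insert _ _))

lemma eq_of_adj_of_adj (h2 : _root_.Free G diamondG) (hs : G.IsMaximumClique s) (hv : v ∉ s)
    (ha : a ∈ s) (hb : b ∈ s) (hva : G.Adj v a) (hvb : G.Adj v b) : a = b := by
  by_contra hab
  obtain ⟨z, hz, hvz⟩ := hs.exists_not_adj hv
  have hza : z ≠ a := fun h => hvz (h ▸ hva)
  have hzb : z ≠ b := fun h => hvz (h ▸ hvb)
  exact hvz <| h2.adj_of_diamond_s18 (hs.isClique ha hb hab) (hs.isClique ha hz hza.symm)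
    (hs.isClique hb hz hzb.symm) hva hvb (fun h => hv (h ▸ hz))

lemma exists_adj_adj_ne (h1 : _root_.Free G twoK2) (h2 : _root_.Free G diamondG)
    (hs : G.IsMaximumClique s) (h3 : 3 ≤ s.card) (hv : v ∉ s) (hw : w ∉ s) (hvw : G.Adj v w) :
    ∃ a ∈ s, ∃ b ∈ s, G.Adj v a ∧ G.Adj w b ∧ a ≠ b := by
  classical
  by_contra! hcon
  -- Otherwise `v` and `w` together see at most one vertex of `s`, and two others form a `2K₂`
  -- with the edge `vw`.
  set N := s.filter fun a => G.Adj v a ∨ G.Adj w a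
  have hN : N.card ≤ 1 := by
    refine Finset.card_le_one.mpr fun a ha b hb => ?_
    simp only [N, Finset.mem_filter] at ha hb
    obtain ⟨ha, hva | hwa⟩ := ha <;> obtain ⟨hb, hvb | hwb⟩ := hb
    · exact hs.eq_of_adj_of_adj h2 hv ha hb hva hvb
    · exact hcon a ha b hb hva hwb
    · exact (hcon b hb a ha hvb hwa).symm
    · exact hs.eq_of_adj_of_adj h2 hw ha hb hwa hwb
  have hrest : 1 < (s \ N).card := by
    have := Finset.le_card_sdiff N s
    omega
  obtain ⟨a, ha, b, hb, hab⟩ := Finset.one_lt_card.mp hrest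
  simp only [N, Finset.mem_sdiff, Finset.mem_filter, not_and, not_or] at ha hb
  have hadj := h1.adj_of_twoK2 hvw (hs.isClique ha.1 hb.1 hab) (fun h => hv (h ▸ ha.1))
    (fun h => hv (h ▸ hb.1)) (fun h => hw (h ▸ ha.1)) (fun h => hw (h ▸ hb.1))
  grind

end SimpleGraph.IsMaximumClique

end

theorem stmt18 {V : Type*} [Fintype V] (G : SimpleGraph V) (h1 : _root_.Free G twoK2)
    (h2 : _root_.Free G diamondG) (hω : 3 ≤ G.cliqueNum) :
    G.chromaticNumber = (G.cliqueNum : ℕ∞) := by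
  obtain ⟨s, hs⟩ := G.maximumClique_exists
  have hcard : s.card = G.cliqueNum := G.maximumClique_card_eq_cliqueNum s hs
  have hcol : G.Colorable G.cliqueNum := hcard ▸ colorable_card_of_forall_adj_eq (by omega)
    (fun v hv a ha b hb => hs.eq_of_adj_of_adj h2 hv ha hb)
    (fun v hv w hw => hs.exists_adj_adj_ne h1 h2 (by omega) hv hw)
  exact le_antisymm hcol.chromaticNumber_le (hcard ▸ hs.isClique.card_le_chromaticNumber)
end

section
/- If G is a (2K₂, diamond)-free graph with clique number ω ≥ 4, then G is perfect. -/
/-!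
A maximum clique `K` of `G` is extended by no outside vertex `v`, so `v` misses some `c ∈ K`;
if `v` saw two vertices `a, b ∈ K`, then `v, c, a, b` would induce a diamond. Hence every
outside vertex has at most one neighbour in `K`, and as `|K| ≥ 4`, two adjacent outside
vertices would miss two vertices of `K` together, which induces a `2K₂`. So `G` is a split
graph, and split graphs are perfect: after moving into the clique an outside vertex that sees
all of it, every outside vertex can take the colour of a clique vertex it misses.
-/

open SimpleGraph

open Finset

theorem Finset.exists_ne_pair_avoiding_of_four_le_card {α : Type*} {t : Finset α} (ht : 4 ≤ #t)
    {P Q : α → Prop} (hP : ∀ a ∈ t, ∀ b ∈ t, P a → P b → a = b)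
    (hQ : ∀ a ∈ t, ∀ b ∈ t, Q a → Q b → a = b) :
    ∃ a ∈ t, ∃ b ∈ t, a ≠ b ∧ ¬P a ∧ ¬Q a ∧ ¬P b ∧ ¬Q b := by
  classical
  have hPt : #{a ∈ t | P a} ≤ 1 := card_le_one.2 fun a ha b hb => by
    rw [mem_filter] at ha hb; exact hP a ha.1 b hb.1 ha.2 hb.2
  have hQt : #{a ∈ t | Q a} ≤ 1 := card_le_one.2 fun a ha b hb => by
    rw [mem_filter] at ha hb; exact hQ a ha.1 b hb.1 ha.2 hb.2
  have hcover : t ⊆ {a ∈ t | ¬P a ∧ ¬Q a} ∪ {a ∈ t | P a} ∪ {a ∈ t | Q a} := by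
    intro a ha; simp only [mem_union, mem_filter, ha, true_and]; tauto
  have hrest : 1 < #{a ∈ t | ¬P a ∧ ¬Q a} := by
    have := (card_le_card hcover).trans (card_union_le _ _)
    have := card_union_le {a ∈ t | ¬P a ∧ ¬Q a} {a ∈ t | P a}
    omega
  obtain ⟨a, ha, b, hb, hab⟩ := one_lt_card.1 hrest
  rw [mem_filter] at ha hb
  exact ⟨a, ha.1, b, hb.1, hab, ha.2.1, ha.2.2, hb.2.1, hb.2.2⟩

namespace SimpleGraph

variable {V : Type*} {G : SimpleGraph V}

def IsSplit (G : SimpleGraph V) : Prop :=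
  ∃ K : Set V, G.IsClique K ∧ G.IsIndepSet Kᶜ

theorem IsSplit.induce (h : G.IsSplit) (s : Set V) : (G.induce s).IsSplit := by
  obtain ⟨K, hK, hI⟩ := h
  refine ⟨Subtype.val ⁻¹' K, fun x hx y hy hxy => hK hx hy ?_, fun x hx y hy hxy => hI hx hy ?_⟩
    <;> exact Subtype.val_injective.ne hxy

theorem IsSplit.exists_forall_exists_not_adj (h : G.IsSplit) :
    ∃ K : Set V, G.IsClique K ∧ G.IsIndepSet Kᶜ ∧ ∀ v ∉ K, ∃ k ∈ K, ¬G.Adj v k := by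
  obtain ⟨K, hK, hI⟩ := h
  by_cases hmiss : ∀ v ∉ K, ∃ k ∈ K, ¬G.Adj v k
  · exact ⟨K, hK, hI, hmiss⟩
  push Not at hmiss
  obtain ⟨v, hv, hvK⟩ := hmiss
  refine ⟨insert v K, hK.insert fun k hk _ => hvK k hk,
    hI.mono (Set.compl_subset_compl.2 (Set.subset_insert v K)),
    fun w hw => ⟨v, Set.mem_insert v K, ?_⟩⟩
  rw [Set.mem_insert_iff, not_or] at hw
  exact hI hw.2 hv hw.1

noncomputable def coloringOfIsIndepSetCompl {K : Set V} (hI : G.IsIndepSet Kᶜ)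
    (hmiss : ∀ v ∉ K, ∃ k ∈ K, ¬G.Adj v k) : G.Coloring K := by
  classical
  choose k hkK hk using hmiss
  refine Coloring.mk (fun v => if hv : v ∈ K then ⟨v, hv⟩ else ⟨k v hv, hkK v hv⟩) ?_
  intro v w hvw heq
  by_cases hv : v ∈ K <;> by_cases hw : w ∈ K <;>
    simp only [hv, hw, dif_pos, dif_neg, not_false_eq_true, Subtype.mk.injEq] at heq
  · exact hvw.ne heq
  · exact hk w hw (heq ▸ hvw.symm)
  · exact hk v hv (heq ▸ hvw)
  · exact hI hv hw hvw.ne hvw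

theorem IsSplit.chromaticNumber_le_cliqueNum [Finite V] (h : G.IsSplit) :
    G.chromaticNumber ≤ G.cliqueNum := by
  classical
  have := Fintype.ofFinite V
  obtain ⟨K, hK, hI, hmiss⟩ := h.exists_forall_exists_not_adj
  rw [← Set.coe_toFinset K] at hK
  calc G.chromaticNumber ≤ Fintype.card K :=
        (coloringOfIsIndepSetCompl hI hmiss).colorable.chromaticNumber_le
    _ = #K.toFinset := by rw [Set.toFinset_card]
    _ ≤ G.cliqueNum := by exact_mod_cast hK.card_le_cliqueNum

theorem IsSplit.isPerfect [Finite V] (h : G.IsSplit) : IsPerfect G := fun s =>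
  le_antisymm (h.induce s).chromaticNumber_le_cliqueNum (G.induce s).cliqueNum_le_chromaticNumber

theorem isInducedCopy_diamondG {v c a b : V} (hvc : v ≠ c) (hvc' : ¬G.Adj v c)
    (hva : G.Adj v a) (hvb : G.Adj v b) (hca : G.Adj c a) (hcb : G.Adj c b) (hab : G.Adj a b) :
    IsInducedCopy diamondG G := by
  have := hva.ne; have := hvb.ne; have := hca.ne; have := hcb.ne; have := hab.ne
  refine ⟨⟨![v, c, a, b], fun i j hij => ?_⟩, fun i j => ?_⟩
  · fin_cases i <;> fin_cases j <;> simp_all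
  · change G.Adj (![v, c, a, b] i) (![v, c, a, b] j) ↔ diamondG.Adj i j
    fin_cases i <;> fin_cases j <;> simp_all [diamondG, fromRel_adj, G.adj_comm]

theorem isInducedCopy_twoK2 {u v a b : V} (hua : u ≠ a) (hub : u ≠ b) (hva : v ≠ a) (hvb : v ≠ b)
    (huv : G.Adj u v) (hab : G.Adj a b)
    (hua' : ¬G.Adj u a) (hub' : ¬G.Adj u b) (hva' : ¬G.Adj v a) (hvb' : ¬G.Adj v b) :
    IsInducedCopy twoK2 G := by
  have := huv.ne; have := hab.ne
  refine ⟨⟨![u, v, a, b], fun i j hij => ?_⟩, fun i j => ?_⟩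
  · fin_cases i <;> fin_cases j <;> simp_all
  · change G.Adj (![u, v, a, b] i) (![u, v, a, b] j) ↔ twoK2.Adj i j
    fin_cases i <;> fin_cases j <;> simp_all [twoK2, fromRel_adj, G.adj_comm]

theorem exists_not_adj_of_maximal_isClique {s : Set V} (hs : Maximal G.IsClique s) {v : V}
    (hv : v ∉ s) : ∃ c ∈ s, ¬G.Adj v c := by
  by_contra! hadj
  exact hv (hs.2 (hs.1.insert fun c hc _ => hadj c hc) (Set.subset_insert v s)
    (Set.mem_insert v s))

theorem eq_of_adj_of_maximal_isClique (h : _root_.Free G diamondG) {s : Set V}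
    (hs : Maximal G.IsClique s) {v a b : V} (hv : v ∉ s) (ha : a ∈ s) (hb : b ∈ s)
    (hva : G.Adj v a) (hvb : G.Adj v b) : a = b := by
  by_contra hab
  obtain ⟨c, hc, hvc⟩ := exists_not_adj_of_maximal_isClique hs hv
  have hca : c ≠ a := by rintro rfl; exact hvc hva
  have hcb : c ≠ b := by rintro rfl; exact hvc hvb
  exact h (isInducedCopy_diamondG (ne_of_mem_of_not_mem hc hv).symm hvc hva hvb
    (hs.1 hc ha hca) (hs.1 hc hb hcb) (hs.1 ha hb hab))

theorem isIndepSet_compl_of_free_twoK2 (h : _root_.Free G twoK2) {t : Finset V}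
    (ht : G.IsClique (t : Set V)) (h4 : 4 ≤ #t)
    (hone : ∀ v ∉ t, ∀ a ∈ t, ∀ b ∈ t, G.Adj v a → G.Adj v b → a = b) :
    G.IsIndepSet (t : Set V)ᶜ := by
  intro u (hu : u ∉ t) v (hv : v ∉ t) _ huv
  obtain ⟨a, ha, b, hb, hab, hua, hva, hub, hvb⟩ :=
    Finset.exists_ne_pair_avoiding_of_four_le_card h4 (hone u hu) (hone v hv)
  exact h (isInducedCopy_twoK2 (ne_of_mem_of_not_mem ha hu).symm (ne_of_mem_of_not_mem hb hu).symm
    (ne_of_mem_of_not_mem ha hv).symm (ne_of_mem_of_not_mem hb hv).symm huv (ht ha hb hab)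
    hua hub hva hvb)

theorem isSplit_of_free_twoK2_of_free_diamondG [Finite V] (h1 : _root_.Free G twoK2)
    (h2 : _root_.Free G diamondG) (hω : 4 ≤ G.cliqueNum) : G.IsSplit := by
  obtain ⟨t, ht⟩ := G.maximumClique_exists
  have hmax := ht.isMaximalClique
  refine ⟨t, ht.isClique, isIndepSet_compl_of_free_twoK2 h1 ht.isClique ?_ ?_⟩
  · rwa [maximumClique_card_eq_cliqueNum t ht]
  · exact fun v hv a ha b hb => eq_of_adj_of_maximal_isClique h2 hmax hv ha hb

end SimpleGraph

theorem stmt19 {V : Type*} [Fintype V] (G : SimpleGraph V) (h1 : _root_.Free G twoK2)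
    (h2 : _root_.Free G diamondG) (hω : 4 ≤ G.cliqueNum) : IsPerfect G := by
  exact (isSplit_of_free_twoK2_of_free_diamondG h1 h2 hω).isPerfect
end
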